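/- arXiv:1810.00257 — 6 statements merged into one kernel-verified Lean document; each statement's English description precedes it below -/
import Mathlib

section
/- Let f_0 : ℝ → ℝ be convex with a minimizer attaining optimal value f_0*. Let m, p, n be positive integers and let ξ^k ∈ ℝ^m, u^k ∈ ℝ^p, x^k ∈ ℝ^n (k = 0, 1, 2, …) be arbitrary sequences. Suppose V : ℝ^m → ℝ satisfies V(ξ) ≥ 0 for all ξ, and σ : ℝ^m × ℝ^p → ℝ satisfies, for all k ≥ 0, both V(ξ^{k+1}) − V(ξ^k) ≤ σ(ξ^k, u^k) and σ(ξ^k, u^k) ≤ −(1/n)·Σ_{i=1}^n [f_0(x_i^k) − f_0*]. Then for every K ≥ 0, (1/n)·Σ_{i=1}^n [f_0(x̄_i^K) − f_0*] ≤ V(ξ^0)/(K+1), where x̄_i^K := (1/(K+1))·Σ_{k=0}^K x_i^k. -/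
/-- **Proposition 2** (dissipativity-based sublinear convergence bound).
If `V` is a nonnegative storage function and `σ` a supply rate satisfying the
dissipation inequality and the supply-rate bound along the trajectory, then the
running averages satisfy the `O(1/K)` bound. -/
theorem dissipativity_sublinear_bound
    (f₀ : ℝ → ℝ) (hconv : ConvexOn ℝ Set.univ f₀)
    (x₀ : ℝ) (hmin : ∀ z : ℝ, f₀ x₀ ≤ f₀ z)
    (m p n : ℕ) (hm : 0 < m) (hp : 0 < p) (hn : 0 < n)
    (ξ : ℕ → Fin m → ℝ) (u : ℕ → Fin p → ℝ) (x : ℕ → Fin n → ℝ)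
    (V : (Fin m → ℝ) → ℝ) (hV : ∀ ζ, 0 ≤ V ζ)
    (σ : (Fin m → ℝ) → (Fin p → ℝ) → ℝ)
    (hdissip : ∀ k : ℕ, V (ξ (k + 1)) - V (ξ k) ≤ σ (ξ k) (u k))
    (hsupply : ∀ k : ℕ,
      σ (ξ k) (u k) ≤ -((1 : ℝ) / n) * ∑ i : Fin n, (f₀ (x k i) - f₀ x₀)) :
    ∀ K : ℕ,
      ((1 : ℝ) / n) *
          ∑ i : Fin n,
            (f₀ ((1 / (K + 1 : ℝ)) * ∑ k ∈ Finset.range (K + 1), x k i) - f₀ x₀)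
        ≤ V (ξ 0) / (K + 1 : ℝ) := by
  intro K
  have hKpos : (0 : ℝ) < (K + 1 : ℝ) := by positivity
  have hnpos : (0 : ℝ) < (n : ℝ) := by exact_mod_cast hn
  -- telescoping bound
  have htel : ((1 : ℝ) / n) * ∑ k ∈ Finset.range (K + 1),
      ∑ i : Fin n, (f₀ (x k i) - f₀ x₀) ≤ V (ξ 0) := by
    have h1 : V (ξ (K + 1)) - V (ξ 0) ≤
        ∑ k ∈ Finset.range (K + 1), σ (ξ k) (u k) := by
      calc V (ξ (K + 1)) - V (ξ 0)
          = ∑ k ∈ Finset.range (K + 1), (V (ξ (k + 1)) - V (ξ k)) := by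
            rw [Finset.sum_range_sub (fun k => V (ξ k))]
        _ ≤ ∑ k ∈ Finset.range (K + 1), σ (ξ k) (u k) :=
            Finset.sum_le_sum fun k _ => hdissip k
    have h2 : ∑ k ∈ Finset.range (K + 1), σ (ξ k) (u k) ≤
        ∑ k ∈ Finset.range (K + 1),
          (-((1 : ℝ) / n) * ∑ i : Fin n, (f₀ (x k i) - f₀ x₀)) :=
      Finset.sum_le_sum fun k _ => hsupply k
    have h3 : -V (ξ 0) ≤ V (ξ (K + 1)) - V (ξ 0) := by
      have := hV (ξ (K + 1)); linarith
    have h4 : -V (ξ 0) ≤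
        -((1 : ℝ) / n) * ∑ k ∈ Finset.range (K + 1),
          ∑ i : Fin n, (f₀ (x k i) - f₀ x₀) := by
      calc -V (ξ 0) ≤ ∑ k ∈ Finset.range (K + 1), σ (ξ k) (u k) :=
            le_trans h3 h1
        _ ≤ _ := by rw [Finset.mul_sum]; simpa using h2
    linarith
  -- Jensen per coordinate
  have hjensen : ∀ i : Fin n,
      f₀ ((1 / (K + 1 : ℝ)) * ∑ k ∈ Finset.range (K + 1), x k i) - f₀ x₀ ≤
        (1 / (K + 1 : ℝ)) *
          ∑ k ∈ Finset.range (K + 1), (f₀ (x k i) - f₀ x₀) := by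
    intro i
    have hw : ∑ k ∈ Finset.range (K + 1), (1 / (K + 1 : ℝ)) = 1 := by
      rw [Finset.sum_const, Finset.card_range]
      field_simp
      rw [nsmul_eq_mul, Nat.cast_add, Nat.cast_one, mul_one_div_cancel hKpos.ne']
    have hj := hconv.map_sum_le (t := Finset.range (K + 1))
      (w := fun _ => 1 / (K + 1 : ℝ)) (p := fun k => x k i)
      (fun _ _ => by positivity) hw (fun _ _ => Set.mem_univ _)
    have heq : (1 / (K + 1 : ℝ)) * ∑ k ∈ Finset.range (K + 1), x k i =
        ∑ k ∈ Finset.range (K + 1), (1 /  (K + 1 : ℝ)) • x k i := by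
      rw [Finset.mul_sum]; rfl
    rw [heq]
    calc f₀ (∑ k ∈ Finset.range (K + 1), (1 / (K + 1 : ℝ)) • x k i) - f₀ x₀
        ≤ (∑ k ∈ Finset.range (K + 1), (1 / (K + 1 : ℝ)) * f₀ (x k i)) - f₀ x₀ := by
          simp only [smul_eq_mul] at hj ⊢
          linarith [hj]
      _ = (1 / (K + 1 : ℝ)) *
          ∑ k ∈ Finset.range (K + 1), (f₀ (x k i) - f₀ x₀) := by
          rw [Finset.mul_sum]
          simp only [mul_sub, Finset.sum_sub_distrib, ← Finset.sum_mul, hw]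
          ring
  have hsum : ∑ i : Fin n,
      (f₀ ((1 / (K + 1 : ℝ)) * ∑ k ∈ Finset.range (K + 1), x k i) - f₀ x₀) ≤
      (1 / (K + 1 : ℝ)) * ∑ k ∈ Finset.range (K + 1),
        ∑ i : Fin n, (f₀ (x k i) - f₀ x₀) := by
    calc ∑ i : Fin n,
        (f₀ ((1 / (K + 1 : ℝ)) * ∑ k ∈ Finset.range (K + 1), x k i) - f₀ x₀)
        ≤ ∑ i : Fin n, (1 / (K + 1 : ℝ)) *
            ∑ k ∈ Finset.range (K + 1), (f₀ (x k i) - f₀ x₀) :=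
          Finset.sum_le_sum fun i _ => hjensen i
      _ = (1 / (K + 1 : ℝ)) * ∑ k ∈ Finset.range (K + 1),
            ∑ i : Fin n, (f₀ (x k i) - f₀ x₀) := by
          rw [← Finset.mul_sum, Finset.sum_comm]
  calc ((1 : ℝ) / n) * ∑ i : Fin n,
        (f₀ ((1 / (K + 1 : ℝ)) * ∑ k ∈ Finset.range (K + 1), x k i) - f₀ x₀)
      ≤ ((1 : ℝ) / n) * ((1 / (K + 1 : ℝ)) * ∑ k ∈ Finset.range (K + 1),
          ∑ i : Fin n, (f₀ (x k i) - f₀ x₀)) := by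
        apply mul_le_mul_of_nonneg_left hsum (by positivity)
    _ = (1 / (K + 1 : ℝ)) * (((1 : ℝ) / n) * ∑ k ∈ Finset.range (K + 1),
          ∑ i : Fin n, (f₀ (x k i) - f₀ x₀)) := by ring
    _ ≤ (1 / (K + 1 : ℝ)) * V (ξ 0) := by
        apply mul_le_mul_of_nonneg_left htel (by positivity)
    _ = V (ξ 0) / (K + 1 : ℝ) := by ring
end

section
/- For all v, w ∈ ℝ and all x ∈ ℝ^n, f_0(v) − f_0(w) ≤ ḡ(x)·(v − w) + (β/(2n))·‖x − v·𝟏‖², where ‖·‖ is the Euclidean norm on ℝ^n. -/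
lemma aux_convex {f : ℝ → ℝ} (hc : ConvexOn ℝ Set.univ f) (hd : Differentiable ℝ f)
    (a b : ℝ) : f a + deriv f a * (b - a) ≤ f b := by
  rcases lt_trichotomy a b with h | h | h
  · have := hc.deriv_le_slope (Set.mem_univ a) (Set.mem_univ b) h (hd a)
    rw [slope_def_field] at this
    have hba : 0 < b - a := by linarith
    nlinarith [(le_div_iff₀ hba).mp this]
  · simp [h]
  · have := hc.slope_le_deriv (Set.mem_univ b) (Set.mem_univ a) h (hd a)
    rw [slope_def_field] at this
    have hab : 0 < a - b := by linarith
    nlinarith [(div_le_iff₀ hab).mp this]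

lemma aux_smooth {f : ℝ → ℝ} {β : ℝ} (hβ : 0 < β) (hd : Differentiable ℝ f)
    (hs : ∀ a b : ℝ, |deriv f a - deriv f b| ≤ β * |a - b|) (a b : ℝ) :
    f b ≤ f a + deriv f a * (b - a) + β / 2 * (b - a) ^ 2 := by
  have hlip : LipschitzWith ⟨β, hβ.le⟩ (deriv f) := by
    apply LipschitzWith.of_dist_le_mul
    intro p q
    simp only [Real.dist_eq]
    exact hs p q
  have hcont : Continuous (deriv f) := hlip.continuous
  have hftc : ∀ c d : ℝ, ∫ t in c..d, deriv f t = f d - f c := fun c d =>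
    intervalIntegral.integral_deriv_eq_sub (fun t _ => hd t)
      (hcont.intervalIntegrable c d)
  have hint : ∀ c d : ℝ, ∫ t in c..d, (deriv f t - deriv f a)
      = f d - f c - deriv f a * (d - c) := by
    intro c d
    rw [intervalIntegral.integral_sub (hcont.intervalIntegrable c d)
      intervalIntegrable_const, hftc, intervalIntegral.integral_const]
    simp [smul_eq_mul]
    ring
  have hq : ∀ c d e : ℝ, ∫ t in c..d, β * (t - e)
      = β / 2 * ((d - e) ^ 2 - (c - e) ^ 2) := by
    intro c d e
    rw [intervalIntegral.integral_const_mul,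
      intervalIntegral.integral_comp_sub_right (fun u => u) e, integral_id]
    ring
  rcases le_or_gt a b with h | h
  · have hmono : ∫ t in a..b, (deriv f t - deriv f a) ≤ ∫ t in a..b, β * (t - a) := by
      apply intervalIntegral.integral_mono_on h
      · exact (hcont.sub continuous_const).intervalIntegrable a b
      · exact ((continuous_const.mul (continuous_id.sub continuous_const)).intervalIntegrable a b)
      · intro t ht
        have h2 : |t - a| = t - a := abs_of_nonneg (by linarith [ht.1])
        calc deriv f t - deriv f a ≤ |deriv f t - deriv f a| := le_abs_self _
          _ ≤ β * |t - a| := hs t a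
          _ = β * (t - a) := by rw [h2]
    rw [hint a b, hq a b a] at hmono
    nlinarith
  · have hmono : ∫ t in b..a, (β * (t - a)) ≤ ∫ t in b..a, (deriv f t - deriv f a) := by
      apply intervalIntegral.integral_mono_on h.le
      · exact ((continuous_const.mul (continuous_id.sub continuous_const)).intervalIntegrable b a)
      · exact (hcont.sub continuous_const).intervalIntegrable b a
      · intro t ht
        have h2 : |a - t| = a - t := abs_of_nonneg (by linarith [ht.2])
        have h3 : deriv f a - deriv f t ≤ β * (a - t) := by
          calc deriv f a - deriv f t ≤ |deriv f a - deriv f t| := le_abs_self _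
            _ ≤ β * |a - t| := hs a t
            _ = β * (a - t) := by rw [h2]
        linarith
    rw [hint b a, hq b a a] at hmono
    nlinarith

/-- **Lemma 1**: for convex `β`-smooth `fᵢ`, `f₀ = (1/n) Σ fᵢ`,
`ḡ(x) = (1/n) Σ fᵢ'(xᵢ)`, and any `v, w ∈ ℝ`, `x ∈ ℝⁿ`,
`f₀(v) − f₀(w) ≤ ḡ(x)(v − w) + (β/(2n)) ‖x − v·𝟏‖²`. -/
theorem smooth_convex_key_inequality
    (n : ℕ) (hn : 0 < n) (β : ℝ) (hβ : 0 < β) (f : Fin n → ℝ → ℝ)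
    (hconv : ∀ i, ConvexOn ℝ Set.univ (f i))
    (hdiff : ∀ i, Differentiable ℝ (f i))
    (hsmooth : ∀ i, ∀ a b : ℝ, |deriv (f i) a - deriv (f i) b| ≤ β * |a - b|)
    (v w : ℝ) (x : EuclideanSpace ℝ (Fin n)) :
    ((1 : ℝ) / n) * ∑ i : Fin n, f i v - ((1 : ℝ) / n) * ∑ i : Fin n, f i w
      ≤ (((1 : ℝ) / n) * ∑ i : Fin n, deriv (f i) (x i)) * (v - w)
        + (β / (2 * n)) *
            ‖x - v • ((WithLp.equiv 2 (Fin n → ℝ)).symm fun _ => (1 : ℝ))‖ ^ 2 := by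
  set y : EuclideanSpace ℝ (Fin n) :=
    x - v • ((WithLp.equiv 2 (Fin n → ℝ)).symm fun _ => (1 : ℝ)) with hy
  have hyi : ∀ i, y i = x i - v := by
    intro i
    rw [hy]
    simp
  have hnorm : ‖y‖ ^ 2 = ∑ i : Fin n, (x i - v) ^ 2 := by
    rw [EuclideanSpace.norm_eq, Real.sq_sqrt (Finset.sum_nonneg fun i _ => sq_nonneg _)]
    exact Finset.sum_congr rfl fun i _ => by rw [hyi i, Real.norm_eq_abs, sq_abs]
  have key : ∀ i, f i v - f i w
      ≤ deriv (f i) (x i) * (v - w) + β / 2 * (x i - v) ^ 2 := by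
    intro i
    have h1 := aux_smooth hβ (hdiff i) (hsmooth i) (x i) v
    have h2 := aux_convex (hconv i) (hdiff i) (x i) w
    nlinarith [sq_nonneg (x i - v), sq_nonneg (v - x i)]
  have hsum : ∑ i : Fin n, (f i v - f i w)
      ≤ ∑ i : Fin n, (deriv (f i) (x i) * (v - w) + β / 2 * (x i - v) ^ 2) :=
    Finset.sum_le_sum fun i _ => key i
  rw [Finset.sum_sub_distrib, Finset.sum_add_distrib, ← Finset.sum_mul,
    ← Finset.mul_sum] at hsum
  have hn' : (0 : ℝ) < n := by exact_mod_cast hn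
  rw [hnorm]
  have h1n : (0 : ℝ) < 1 / n := by positivity
  have h2 := mul_le_mul_of_nonneg_left hsum h1n.le
  have heq : β / (2 * (n : ℝ)) * ∑ i : Fin n, (x i - v) ^ 2
      = 1 / (n : ℝ) * (β / 2 * ∑ i : Fin n, (x i - v) ^ 2) := by ring
  nlinarith [h2, heq]
end

section
/- For every x ∈ ℝ^n, setting x̂ := x − x_0*·𝟏 and û := g(x) − g(x_0*·𝟏), it holds that (1/n)·Σ_{i=1}^n [f_0(x_i) − f_0*] ≤ (1/n)·( x̂ᵀ J û + β·x̂ᵀ J_⊥ x̂ ). Equivalently, the quadratic supply rate σ_0(ξ, u) := [ξ̂; û]ᵀ S_0 [ξ̂; û] with S_0 := −(1/n)·[[β·Cᵀ J_⊥ C, Cᵀ J/2], [J C/2, 0]] and C := [I_n, 0] satisfies σ_0 ≤ −(1/n)·Σ_{i=1}^n [f_0(x_i) − f_0*]. -/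
open Matrix

/-- Descent lemma: β-smooth differentiable f satisfies quadratic upper bound. -/
lemma descent_lemma (β : ℝ) (hβ : 0 < β) (f : ℝ → ℝ) (hdiff : Differentiable ℝ f)
    (hsmooth : ∀ a b : ℝ, |deriv f a - deriv f b| ≤ β * |a - b|) (a b : ℝ) :
    f b ≤ f a + deriv f a * (b - a) + β / 2 * (b - a) ^ 2 := by
  set d : ℝ := b - a with hd
  set c : ℝ := deriv f a with hc
  set g : ℝ → ℝ := fun t => f (a + t * d) - t * (c * d) - β / 2 * (t ^ 2 * d ^ 2) with hg
  have hg' : ∀ t : ℝ, HasDerivAt g (deriv f (a + t * d) * d - c * d - β / 2 * (2 * t * d ^ 2)) t := by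
    intro t
    have h1 : HasDerivAt (fun t : ℝ => a + t * d) d t := by
      simpa using ((hasDerivAt_id t).mul_const d).const_add a
    have h2 : HasDerivAt (fun t : ℝ => f (a + t * d)) (deriv f (a + t * d) * d) t :=
      (hdiff (a + t * d)).hasDerivAt.comp t h1
    have h3 : HasDerivAt (fun t : ℝ => t * (c * d)) (c * d) t := by
      simpa using (hasDerivAt_id t).mul_const (c * d)
    have h4 : HasDerivAt (fun t : ℝ => β / 2 * (t ^ 2 * d ^ 2)) (β / 2 * (2 * t * d ^ 2)) t := by
      have := ((hasDerivAt_pow 2 t).mul_const (d ^ 2)).const_mul (β / 2)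
      simpa using this
    exact (h2.sub h3).sub h4
  have hmono : AntitoneOn g (Set.Icc (0 : ℝ) 1) := by
    apply antitoneOn_of_deriv_nonpos (convex_Icc 0 1)
    · exact (fun t _ => ((hg' t).differentiableAt).continuousAt.continuousWithinAt)
    · exact fun t _ => ((hg' t).differentiableAt).differentiableWithinAt
    · intro t ht
      rw [interior_Icc] at ht
      rw [(hg' t).deriv]
      have hkey : (deriv f (a + t * d) - c) * d ≤ β * t * d ^ 2 := by
        calc (deriv f (a + t * d) - c) * d ≤ |deriv f (a + t * d) - c| * |d| := by
              calc (deriv f (a + t * d) - c) * d ≤ |(deriv f (a + t * d) - c) * d| := le_abs_self _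
                _ = |deriv f (a + t * d) - c| * |d| := abs_mul _ _
          _ ≤ (β * |a + t * d - a|) * |d| := by
              apply mul_le_mul_of_nonneg_right (hsmooth _ _) (abs_nonneg _)
          _ = β * t * d ^ 2 := by
              have : |a + t * d - a| = t * |d| := by
                rw [add_sub_cancel_left, abs_mul, abs_of_pos ht.1]
              rw [this, show β * (t * |d|) * |d| = β * t * (|d| * |d|) from by ring,
                abs_mul_abs_self]
              ring
      have heq : deriv f (a + t * d) * d - c * d - β / 2 * (2 * t * d ^ 2)
          = (deriv f (a + t * d) - c) * d - β * t * d ^ 2 := by ring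
      rw [heq]
      linarith [hkey]
  have h01 : g 1 ≤ g 0 := hmono (by simp) (by norm_num) zero_le_one
  have hg0 : g 0 = f a := by simp [hg]
  have hg1 : g 1 = f b - c * d - β / 2 * d ^ 2 := by simp [hg, hd]
  rw [hg0, hg1] at h01
  nlinarith [h01]

/-- Gradient inequality for convex differentiable functions. -/
lemma grad_ineq (f : ℝ → ℝ) (hconv : ConvexOn ℝ Set.univ f) (hdiff : Differentiable ℝ f)
    (a z : ℝ) : f a + deriv f a * (z - a) ≤ f z := by
  rcases lt_trichotomy a z with h | h | h
  · have := hconv.deriv_le_slope (Set.mem_univ a) (Set.mem_univ z) h (hdiff a)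
    rw [slope_def_field] at this
    have hz : 0 < z - a := by linarith
    rw [le_div_iff₀ hz] at this
    nlinarith [this]
  · subst h; simp
  · have := hconv.slope_le_deriv (Set.mem_univ z) (Set.mem_univ a) h (hdiff a)
    rw [slope_def_field] at this
    have hz : 0 < a - z := by linarith
    rw [div_le_iff₀ hz] at this
    nlinarith [this]
open Matrix
lemma dot1 (n : ℕ) (u v : Fin n → ℝ) :
    u ⬝ᵥ ((((n : ℝ)⁻¹ • (fun _ _ => (1 : ℝ)) : Matrix (Fin n) (Fin n) ℝ)) *ᵥ v)
      = (n : ℝ)⁻¹ * (∑ i, u i) * (∑ j, v j) := by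
  have hJ : ∀ (i j : Fin n),
      (((n : ℝ)⁻¹ • (fun _ _ => (1 : ℝ)) : Matrix (Fin n) (Fin n) ℝ)) i j = (n : ℝ)⁻¹ := by
    intro i j; show (n : ℝ)⁻¹ * 1 = (n : ℝ)⁻¹; ring
  simp [dotProduct, Matrix.mulVec, hJ, Finset.mul_sum, Finset.sum_mul]
  rw [Finset.sum_comm]
  exact Finset.sum_congr rfl fun i _ => Finset.sum_congr rfl fun j _ => by ring

lemma dot2 (n : ℕ) (u : Fin n → ℝ) :
    u ⬝ᵥ (((1 - (n : ℝ)⁻¹ • (fun _ _ => (1 : ℝ)) : Matrix (Fin n) (Fin n) ℝ)) *ᵥ u)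
      = (∑ i, (u i)^2) - (n : ℝ)⁻¹ * (∑ i, u i)^2 := by
  have hJ : ∀ (i j : Fin n),
      ((1 - (n : ℝ)⁻¹ • (fun _ _ => (1 : ℝ)) : Matrix (Fin n) (Fin n) ℝ)) i j
        = (if i = j then 1 else 0) - (n : ℝ)⁻¹ := fun i j => by
    have : (((n : ℝ)⁻¹ • (fun _ _ => (1 : ℝ)) : Matrix (Fin n) (Fin n) ℝ)) i j = (n : ℝ)⁻¹ := by show (n : ℝ)⁻¹ * 1 = (n : ℝ)⁻¹; ring
    simp [Matrix.sub_apply, Matrix.one_apply, this]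
  simp [dotProduct, Matrix.mulVec, hJ, sub_mul, ite_mul, Finset.sum_sub_distrib,
    Finset.mul_sum, mul_sub, sq, Finset.sum_mul]
  rw [Finset.sum_comm]
  exact Finset.sum_congr rfl fun i _ => Finset.sum_congr rfl fun j _ => by ring

/-- **Proposition 3** (choice of base supply rate): with `x̂ = x − x₀*𝟏` and
`û = g(x) − g(x₀*𝟏)`,
`(1/n) Σᵢ [f₀(xᵢ) − f₀*] ≤ (1/n)(x̂ᵀ J û + β x̂ᵀ J_⊥ x̂)`. -/
theorem base_supply_rate_bound
    (n : ℕ) (hn : 0 < n) (β : ℝ) (hβ : 0 < β) (f : Fin n → ℝ → ℝ)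
    (hconv : ∀ i, ConvexOn ℝ Set.univ (f i))
    (hdiff : ∀ i, Differentiable ℝ (f i))
    (hsmooth : ∀ i, ∀ a b : ℝ, |deriv (f i) a - deriv (f i) b| ≤ β * |a - b|)
    (x₀ : ℝ) (hmin : ∀ z : ℝ, ((1 : ℝ) / n) * ∑ i : Fin n, f i x₀
                              ≤ ((1 : ℝ) / n) * ∑ i : Fin n, f i z)
    (x : Fin n → ℝ) :
    letI J : Matrix (Fin n) (Fin n) ℝ := (n : ℝ)⁻¹ • (fun _ _ => (1 : ℝ))
    letI Jp : Matrix (Fin n) (Fin n) ℝ := 1 - J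
    letI xhat : Fin n → ℝ := fun i => x i - x₀
    letI uhat : Fin n → ℝ := fun i => deriv (f i) (x i) - deriv (f i) x₀
    ((1 : ℝ) / n) *
        ∑ i : Fin n,
          (((1 : ℝ) / n) * ∑ j : Fin n, f j (x i)
            - ((1 : ℝ) / n) * ∑ j : Fin n, f j x₀)
      ≤ ((1 : ℝ) / n) * (xhat ⬝ᵥ (J *ᵥ uhat) + β * (xhat ⬝ᵥ (Jp *ᵥ xhat))) := by
  have hn' : (0 : ℝ) < n := by exact_mod_cast hn
  -- the derivative of the sum vanishes at the minimizer
  have hsum0 : ∑ j : Fin n, deriv (f j) x₀ = 0 := by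
    have hF : HasDerivAt (fun z => ∑ j : Fin n, f j z) (∑ j : Fin n, deriv (f j) x₀) x₀ :=
      HasDerivAt.fun_sum (fun j _ => ((hdiff j) x₀).hasDerivAt)
    have hlm : IsLocalMin (fun z => ∑ j : Fin n, f j z) x₀ := by
      apply Filter.Eventually.of_forall
      intro z
      have h := hmin z
      have hpos : (0 : ℝ) < 1 / n := by positivity
      exact (mul_le_mul_iff_right₀ hpos).mp h
    have := hlm.deriv_eq_zero
    rwa [hF.deriv] at this
  -- per-pair inequality
  have key : ∀ i j : Fin n, f j (x i) - f j x₀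
      ≤ deriv (f j) (x j) * (x i - x₀) + β / 2 * (x i - x j) ^ 2 := by
    intro i j
    have hA' := descent_lemma β hβ (f j) (hdiff j) (hsmooth j) (x j) (x i)
    have hB' := grad_ineq (f j) (hconv j) (hdiff j) (x j) x₀
    nlinarith [hA', hB']
  have h1 : (∑ i : Fin n, ∑ j : Fin n, (f j (x i) - f j x₀))
      ≤ ∑ i : Fin n, ∑ j : Fin n,
          (deriv (f j) (x j) * (x i - x₀) + β / 2 * (x i - x j) ^ 2) :=
    Finset.sum_le_sum fun i _ => Finset.sum_le_sum fun j _ => key i j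
  have h2 : (∑ i : Fin n, ∑ j : Fin n,
        (deriv (f j) (x j) * (x i - x₀) + β / 2 * (x i - x j) ^ 2))
      = (∑ j : Fin n, deriv (f j) (x j)) * (∑ i : Fin n, (x i - x₀))
        + β / 2 * ∑ i : Fin n, ∑ j : Fin n, (x i - x j) ^ 2 := by
    have hrow : ∀ i : Fin n, (∑ j : Fin n,
          (deriv (f j) (x j) * (x i - x₀) + β / 2 * (x i - x j) ^ 2))
        = (∑ j : Fin n, deriv (f j) (x j)) * (x i - x₀)
          + β / 2 * ∑ j : Fin n, (x i - x j) ^ 2 := by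
      intro i
      rw [Finset.sum_add_distrib, ← Finset.sum_mul, ← Finset.mul_sum]
    rw [Finset.sum_congr rfl fun i _ => hrow i, Finset.sum_add_distrib, ← Finset.mul_sum,
      ← Finset.mul_sum]
  have hQ : (∑ i : Fin n, ∑ j : Fin n, ((x i : ℝ) - x j) ^ 2)
      = 2 * (n : ℝ) * (∑ i : Fin n, (x i - x₀) ^ 2) - 2 * (∑ i : Fin n, (x i - x₀)) ^ 2 := by
    have hrow : ∀ i : Fin n, (∑ j : Fin n, ((x i : ℝ) - x j) ^ 2)
        = (n : ℝ) * (x i - x₀) ^ 2 - 2 * ((x i - x₀) * (∑ j : Fin n, (x j - x₀)))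
          + ∑ j : Fin n, (x j - x₀) ^ 2 := by
      intro i
      have hterm : ∀ j : Fin n, ((x i : ℝ) - x j) ^ 2
          = (x i - x₀) ^ 2 - 2 * ((x i - x₀) * (x j - x₀)) + (x j - x₀) ^ 2 := fun j => by ring
      rw [Finset.sum_congr rfl fun j _ => hterm j, Finset.sum_add_distrib,
        Finset.sum_sub_distrib, Finset.sum_const, ← Finset.mul_sum, ← Finset.mul_sum,
        Finset.card_univ, Fintype.card_fin, nsmul_eq_mul]
    rw [Finset.sum_congr rfl fun i _ => hrow i, Finset.sum_add_distrib,
      Finset.sum_sub_distrib, Finset.sum_const, ← Finset.mul_sum, ← Finset.mul_sum,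
      ← Finset.sum_mul, Finset.card_univ, Fintype.card_fin, nsmul_eq_mul]
    ring
  -- combine
  have hb : (∑ i : Fin n, ∑ j : Fin n, (f j (x i) - f j x₀))
      ≤ (∑ j : Fin n, deriv (f j) (x j)) * (∑ i : Fin n, (x i - x₀))
        + β * ((n : ℝ) * (∑ i : Fin n, (x i - x₀) ^ 2) - (∑ i : Fin n, (x i - x₀)) ^ 2) := by
    rw [hQ] at h2
    have := h1.trans_eq h2
    nlinarith [this]
  -- rewrite the goal
  rw [dot1, dot2]
  have hu : (∑ j : Fin n, (deriv (f j) (x j) - deriv (f j) x₀))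
      = ∑ j : Fin n, deriv (f j) (x j) := by
    rw [Finset.sum_sub_distrib, hsum0, sub_zero]
  have hLHS : (∑ i : Fin n,
        (((1 : ℝ) / n) * ∑ j : Fin n, f j (x i) - ((1 : ℝ) / n) * ∑ j : Fin n, f j x₀))
      = (1 / (n : ℝ)) * ∑ i : Fin n, ∑ j : Fin n, (f j (x i) - f j x₀) := by
    have hrow : ∀ i : Fin n, (((1 : ℝ) / n) * ∑ j : Fin n, f j (x i)
        - ((1 : ℝ) / n) * ∑ j : Fin n, f j x₀)
        = (1 / (n : ℝ)) * ∑ j : Fin n, (f j (x i) - f j x₀) := by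
      intro i; rw [Finset.sum_sub_distrib, mul_sub]
    rw [Finset.sum_congr rfl fun i _ => hrow i, ← Finset.mul_sum]
  rw [hLHS, hu]
  have hmul := mul_le_mul_of_nonneg_left hb
    (by positivity : (0 : ℝ) ≤ (1 / (n : ℝ)) ^ 2)
  have heq : (1 / (n : ℝ)) ^ 2 *
      ((∑ j : Fin n, deriv (f j) (x j)) * (∑ i : Fin n, (x i - x₀))
        + β * ((n : ℝ) * (∑ i : Fin n, (x i - x₀) ^ 2) - (∑ i : Fin n, (x i - x₀)) ^ 2))
      = ((1 : ℝ) / n) *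
        ((n : ℝ)⁻¹ * (∑ i : Fin n, (x i - x₀)) * (∑ j : Fin n, deriv (f j) (x j))
          + β * ((∑ i : Fin n, (x i - x₀) ^ 2)
            - (n : ℝ)⁻¹ * (∑ i : Fin n, (x i - x₀)) ^ 2)) := by
    field_simp
  calc ((1 : ℝ) / n) * ((1 / (n : ℝ)) * ∑ i : Fin n, ∑ j : Fin n, (f j (x i) - f j x₀))
      = (1 / (n : ℝ)) ^ 2 * ∑ i : Fin n, ∑ j : Fin n, (f j (x i) - f j x₀) := by ring
    _ ≤ (1 / (n : ℝ)) ^ 2 *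
        ((∑ j : Fin n, deriv (f j) (x j)) * (∑ i : Fin n, (x i - x₀))
          + β * ((n : ℝ) * (∑ i : Fin n, (x i - x₀) ^ 2)
            - (∑ i : Fin n, (x i - x₀)) ^ 2)) := hmul
    _ = _ := heq
end

section
/- Suppose there exist a positive semidefinite matrix P ∈ ℝ^{2n×2n} and a scalar λ₁ ≥ 0 such that for every ξ̂ = (ξ̂₁, ξ̂₂) ∈ ℝ^n × ℝ^n with 𝟏ᵀξ̂₂ = 0 and every û ∈ ℝ^n, the inequality [ξ̂; û]ᵀ ( [[AᵀPA − P, AᵀPB], [BᵀPA, BᵀPB]] − S_0 + λ₁·[[C, 0], [0, I_n]]ᵀ M_1 [[C, 0], [0, I_n]] ) [ξ̂; û] ≤ 0 holds, where A := [[W, −η·I_n], [0, W]], B := [[−η·I_n], [W − I_n]], C := [I_n, 0], S_0 := −(1/n)·[[β·Cᵀ J_⊥ C, Cᵀ J/2], [J C/2, 0]], and M_1 := [[0, β·I_n], [β·I_n, −2·I_n]]. Then for every K ≥ 0, the iterates of the distributed gradient tracking algorithm satisfy (1/n)·Σ_{i=1}^n [f_0(x̄_i^K) − f_0*] ≤ (ξ^0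 − ξ*)ᵀ P (ξ^0 − ξ*)/(K+1), where x̄_i^K := (1/(K+1))·Σ_{k=0}^K x_i^k, ξ^0 := (x^0, 0) ∈ ℝ^{2n}, and ξ* := (x_0*·𝟏, −g(x_0*·𝟏)) ∈ ℝ^{2n}. -/
open Matrix

lemma gt_convex_lb (f : ℝ → ℝ) (hc : ConvexOn ℝ Set.univ f) (hd : Differentiable ℝ f)
    (a b : ℝ) : f a + deriv f a * (b - a) ≤ f b := by
  rcases lt_trichotomy a b with h | rfl | h
  · have := hc.deriv_le_slope (Set.mem_univ a) (Set.mem_univ b) h (hd a)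
    rw [slope_def_field, le_div_iff₀ (by linarith : (0:ℝ) < b - a)] at this
    nlinarith
  · simp
  · have := hc.slope_le_deriv (Set.mem_univ b) (Set.mem_univ a) h (hd a)
    rw [slope_def_field, div_le_iff₀ (by linarith : (0:ℝ) < a - b)] at this
    nlinarith

lemma gt_descent (β : ℝ) (f : ℝ → ℝ) (hc : ConvexOn ℝ Set.univ f)
    (hd : Differentiable ℝ f) (hsm : ∀ a b : ℝ, |deriv f a - deriv f b| ≤ β * |a - b|)
    (a b : ℝ) : f b ≤ f a + deriv f a * (b - a) + β / 2 * (b - a) ^ 2 := by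
  set h : ℝ → ℝ := fun z => β / 2 * z ^ 2 - f z with hh
  have hder : ∀ z, HasDerivAt h (β * z - deriv f z) z := by
    intro z
    have h1 : HasDerivAt (fun z : ℝ => β / 2 * z ^ 2) (β / 2 * (2 * z ^ 1)) z :=
      (hasDerivAt_pow 2 z).const_mul (β / 2)
    have := h1.sub (hd z).hasDerivAt
    exact this.congr_deriv (by ring)
  have hdh : Differentiable ℝ h := fun z => (hder z).differentiableAt
  have hmono : Monotone (deriv h) := by
    intro p q hpq
    rw [(hder p).deriv, (hder q).deriv]
    have := hsm q p
    have h2 : deriv f q - deriv f p ≤ β * (q - p) := by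
      have h3 : |q - p| = q - p := abs_of_nonneg (by linarith)
      have h4 := hsm q p
      rw [h3] at h4
      have h5 := le_abs_self (deriv f q - deriv f p)
      linarith
    linarith
  have hch : ConvexOn ℝ Set.univ h := hmono.convexOn_univ_of_deriv hdh
  have := gt_convex_lb h hch hdh a b
  rw [(hder a).deriv] at this
  simp only [hh] at this
  nlinarith

lemma gt_sq_expand (n : ℕ) (y : Fin n → ℝ) (c : ℝ) :
    ∑ i, (y i - c) ^ 2 = (∑ i, y i ^ 2) - 2 * c * (∑ i, y i) + n * c ^ 2 := by
  have h : ∀ i : Fin n, (y i - c) ^ 2 = y i ^ 2 - 2 * c * y i + c ^ 2 := fun i => by ring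
  simp_rw [h]
  rw [Finset.sum_add_distrib, Finset.sum_sub_distrib, ← Finset.mul_sum, Finset.sum_const,
    Finset.card_univ, Fintype.card_fin, nsmul_eq_mul]

lemma gt_scalar (n : ℕ) (hn : 0 < n) (β : ℝ) (hβ : 0 < β) (f : Fin n → ℝ → ℝ)
    (hconv : ∀ i, ConvexOn ℝ Set.univ (f i))
    (hdiff : ∀ i, Differentiable ℝ (f i))
    (hsmooth : ∀ i, ∀ a b : ℝ, |deriv (f i) a - deriv (f i) b| ≤ β * |a - b|)
    (x₀ : ℝ) (hopt : ∑ i, deriv (f i) x₀ = 0) (y : Fin n → ℝ) :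
    ((1:ℝ)/n) * ∑ i : Fin n, (((1:ℝ)/n) * ∑ j : Fin n, f j (y i)
        - ((1:ℝ)/n) * ∑ j : Fin n, f j x₀)
    ≤ (n:ℝ)⁻¹ * (β * ((∑ i, (y i - x₀) ^ 2) - (n:ℝ)⁻¹ * (∑ i, (y i - x₀)) ^ 2)
        + (n:ℝ)⁻¹ * (∑ i, (y i - x₀))
          * (∑ i, (deriv (f i) (y i) - deriv (f i) x₀))) := by
  have hν : (0:ℝ) < n := by exact_mod_cast hn
  have hinv : (n:ℝ) * (n:ℝ)⁻¹ = 1 := mul_inv_cancel₀ hν.ne'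
  set Yb : ℝ := (n:ℝ)⁻¹ * ∑ i, y i with hYb
  -- step A, summed over j then i
  have hA : ∀ j : Fin n, ∑ i, f j (y i)
      ≤ n * f j Yb + β / 2 * ∑ i, (y i - Yb) ^ 2 := by
    intro j
    have h1 : ∀ i : Fin n, f j (y i)
        ≤ f j Yb + deriv (f j) Yb * (y i - Yb) + β / 2 * (y i - Yb) ^ 2 :=
      fun i => gt_descent β (f j) (hconv j) (hdiff j) (hsmooth j) Yb (y i)
    have h2 := Finset.sum_le_sum (fun i (_ : i ∈ Finset.univ) => h1 i)
    have h3 : ∑ i, (f j Yb + deriv (f j) Yb * (y i - Yb) + β / 2 * (y i - Yb) ^ 2)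
        = n * f j Yb + deriv (f j) Yb * (∑ i, (y i - Yb)) + β / 2 * ∑ i, (y i - Yb) ^ 2 := by
      rw [Finset.sum_add_distrib, Finset.sum_add_distrib, Finset.sum_const,
        Finset.card_univ, Fintype.card_fin, nsmul_eq_mul, ← Finset.mul_sum, ← Finset.mul_sum]
    have h4 : ∑ i, (y i - Yb) = 0 := by
      rw [Finset.sum_sub_distrib, Finset.sum_const, Finset.card_univ, Fintype.card_fin,
        nsmul_eq_mul, hYb]
      field_simp
      ring
    rw [h3, h4] at h2
    linarith
  have hB : ∀ j : Fin n, f j Yb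
      ≤ f j x₀ + deriv (f j) (y j) * (Yb - x₀) + β / 2 * (y j - Yb) ^ 2 := by
    intro j
    have h1 := gt_descent β (f j) (hconv j) (hdiff j) (hsmooth j) (y j) Yb
    have h2 := gt_convex_lb (f j) (hconv j) (hdiff j) (y j) x₀
    nlinarith
  set T : ℝ := ∑ j : Fin n, ∑ i : Fin n, f j (y i) with hT
  set F0 : ℝ := ∑ j : Fin n, f j x₀ with hF0
  set G : ℝ := ∑ j : Fin n, deriv (f j) (y j) with hG
  set Q1 : ℝ := ∑ i : Fin n, (y i - Yb) ^ 2 with hQ1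
  have hcomb : T ≤ (n:ℝ) * (F0 + (Yb - x₀) * G + β * Q1) := by
    have h1 := Finset.sum_le_sum (fun j (_ : j ∈ Finset.univ) => hA j)
    have h2 := Finset.sum_le_sum (fun j (_ : j ∈ Finset.univ) => hB j)
    have h3 : ∑ j : Fin n, ((n:ℝ) * f j Yb + β / 2 * Q1)
        = (n:ℝ) * (∑ j, f j Yb) + (n:ℝ) * (β / 2 * Q1) := by
      rw [Finset.sum_add_distrib, ← Finset.mul_sum, Finset.sum_const, Finset.card_univ,
        Fintype.card_fin, nsmul_eq_mul]
    have h4 : ∑ j : Fin n, (f j x₀ + deriv (f j) (y j) * (Yb - x₀) + β / 2 * (y j - Yb) ^ 2)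
        = F0 + G * (Yb - x₀) + β / 2 * Q1 := by
      rw [Finset.sum_add_distrib, Finset.sum_add_distrib, ← Finset.sum_mul, ← Finset.mul_sum]
    rw [h3] at h1
    rw [h4] at h2
    nlinarith [h1, h2]
  -- identify LHS
  have hLHS : ((1:ℝ)/n) * ∑ i : Fin n, (((1:ℝ)/n) * ∑ j : Fin n, f j (y i)
        - ((1:ℝ)/n) * ∑ j : Fin n, f j x₀)
      = (n:ℝ)⁻¹ * ((n:ℝ)⁻¹ * T - F0) := by
    have hswap : ∑ i : Fin n, ∑ j : Fin n, f j (y i) = T := by rw [hT]; exact Finset.sum_comm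
    rw [Finset.sum_sub_distrib, ← Finset.mul_sum, hswap, Finset.sum_const, Finset.card_univ,
      Fintype.card_fin, nsmul_eq_mul, one_div]
    field_simp
    rw [hF0]
  rw [hLHS]
  -- identify RHS
  have hSe : ∑ i, (y i - x₀) = (n:ℝ) * (Yb - x₀) := by
    rw [Finset.sum_sub_distrib, Finset.sum_const, Finset.card_univ, Fintype.card_fin,
      nsmul_eq_mul, hYb]
    field_simp
  have hQe : (∑ i, (y i - x₀) ^ 2) - (n:ℝ)⁻¹ * (∑ i, (y i - x₀)) ^ 2 = Q1 := by
    rw [hSe, gt_sq_expand n y x₀, hQ1, gt_sq_expand n y Yb, hYb]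
    field_simp
    ring
  have hud : ∑ i, (deriv (f i) (y i) - deriv (f i) x₀) = G := by
    rw [Finset.sum_sub_distrib, hopt, hG, sub_zero]
  rw [hQe, hud, hSe]
  have hn1 : (n:ℝ)⁻¹ * T ≤ F0 + (Yb - x₀) * G + β * Q1 := by
    have h5 : (n:ℝ)⁻¹ * T ≤ (n:ℝ)⁻¹ * ((n:ℝ) * (F0 + (Yb - x₀) * G + β * Q1)) :=
      mul_le_mul_of_nonneg_left hcomb (by positivity)
    rw [← mul_assoc, inv_mul_cancel₀ hν.ne', one_mul] at h5
    exact h5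
  have hfin : (n:ℝ)⁻¹ * ((n:ℝ) * (Yb - x₀)) = Yb - x₀ := by
    rw [← mul_assoc, inv_mul_cancel₀ hν.ne', one_mul]
  calc (n:ℝ)⁻¹ * ((n:ℝ)⁻¹ * T - F0)
      ≤ (n:ℝ)⁻¹ * ((Yb - x₀) * G + β * Q1) :=
        mul_le_mul_of_nonneg_left (by linarith) (by positivity)
    _ = (n:ℝ)⁻¹ * (β * Q1 + (n:ℝ)⁻¹ * ((n:ℝ) * (Yb - x₀)) * G) := by rw [hfin]; ring


lemma gt_coco (β : ℝ) (hβ : 0 < β) (f : ℝ → ℝ) (hc : ConvexOn ℝ Set.univ f)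
    (hd : Differentiable ℝ f) (hsm : ∀ a b : ℝ, |deriv f a - deriv f b| ≤ β * |a - b|)
    (a b : ℝ) : (deriv f a - deriv f b) ^ 2 ≤ β * ((a - b) * (deriv f a - deriv f b)) := by
  have hmono : Monotone (deriv f) := by
    intro p q hpq
    exact hc.monotoneOn_deriv (fun z _ => hd z) (Set.mem_univ p) (Set.mem_univ q) hpq
  have hsign : 0 ≤ (a - b) * (deriv f a - deriv f b) := by
    rcases le_total a b with h | h
    · have := hmono h; nlinarith
    · have := hmono h; nlinarith
  have h2 := hsm a b
  nlinarith [abs_nonneg (deriv f a - deriv f b), abs_nonneg (a - b), sq_abs (deriv f a - deriv f b),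
    sq_abs (a - b), abs_mul_abs_self (deriv f a - deriv f b), abs_mul_abs_self (a - b),
    abs_mul (a - b) (deriv f a - deriv f b), abs_of_nonneg hsign]

lemma gt_jensen (f : ℝ → ℝ) (hc : ConvexOn ℝ Set.univ f) (hd : Differentiable ℝ f)
    (K : ℕ) (w : ℕ → ℝ) :
    f ((1/((K:ℝ)+1)) * ∑ k ∈ Finset.range (K+1), w k)
      ≤ (1/((K:ℝ)+1)) * ∑ k ∈ Finset.range (K+1), f (w k) := by
  have hK : (0:ℝ) < (K:ℝ)+1 := by positivity
  set m := (1/((K:ℝ)+1)) * ∑ k ∈ Finset.range (K+1), w k with hm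
  have h1 : ∑ k ∈ Finset.range (K+1), (f m + deriv f m * (w k - m))
      ≤ ∑ k ∈ Finset.range (K+1), f (w k) :=
    Finset.sum_le_sum fun k _ => gt_convex_lb f hc hd m (w k)
  have h2 : ∑ k ∈ Finset.range (K+1), (f m + deriv f m * (w k - m))
      = ((K:ℝ)+1) * f m
        + deriv f m * ((∑ k ∈ Finset.range (K+1), w k) - ((K:ℝ)+1) * m) := by
    rw [Finset.sum_add_distrib, Finset.sum_const, Finset.card_range, ← Finset.mul_sum,
      Finset.sum_sub_distrib, Finset.sum_const, Finset.card_range, nsmul_eq_mul, nsmul_eq_mul]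
    push_cast; ring
  have h3 : ((K:ℝ)+1) * m = ∑ k ∈ Finset.range (K+1), w k := by
    rw [hm]; field_simp
  rw [h2, h3, sub_self, mul_zero, add_zero] at h1
  have h4 : (1/((K:ℝ)+1)) * (((K:ℝ)+1) * f m) = f m := by field_simp
  calc f m = (1/((K:ℝ)+1)) * (((K:ℝ)+1) * f m) := h4.symm
    _ ≤ (1/((K:ℝ)+1)) * ∑ k ∈ Finset.range (K+1), f (w k) :=
        mul_le_mul_of_nonneg_left h1 (by positivity)


lemma gt_quad_expand {m p : Type*} [Fintype m] [Fintype p]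
    (P : Matrix m m ℝ) (A : Matrix m m ℝ) (B : Matrix m p ℝ) (X : m → ℝ) (u : p → ℝ) :
    Sum.elim X u ⬝ᵥ
      (fromBlocks (Aᵀ * P * A - P) (Aᵀ * P * B) (Bᵀ * P * A) (Bᵀ * P * B) *ᵥ Sum.elim X u)
    = (A *ᵥ X + B *ᵥ u) ⬝ᵥ (P *ᵥ (A *ᵥ X + B *ᵥ u)) - X ⬝ᵥ (P *ᵥ X) := by
  simp only [fromBlocks_mulVec, Sum.elim_comp_inl, Sum.elim_comp_inr, sub_mulVec,
    ← mulVec_mulVec, sumElim_dotProduct_sumElim, dotProduct_add, dotProduct_sub,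
    mulVec_add, add_dotProduct, add_vecMul, dotProduct_mulVec, vecMul_transpose]
  ring

lemma gt_J_apply (n : ℕ) (i j : Fin n) :
    (((n:ℝ)⁻¹ • (fun _ _ => (1:ℝ)) : Matrix (Fin n) (Fin n) ℝ)) i j = (n:ℝ)⁻¹ := by
  show (n:ℝ)⁻¹ • (1:ℝ) = _
  simp

lemma gt_J_mulVec (n : ℕ) (v : Fin n → ℝ) :
    (((n:ℝ)⁻¹ • (fun _ _ => (1:ℝ)) : Matrix (Fin n) (Fin n) ℝ)) *ᵥ v
      = fun _ => (n:ℝ)⁻¹ * ∑ j, v j := by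
  ext i
  simp [mulVec, dotProduct, gt_J_apply, Finset.mul_sum]

lemma gt_dot_const (n : ℕ) (v : Fin n → ℝ) (c : ℝ) :
    v ⬝ᵥ (fun _ => c) = (∑ i, v i) * c := by
  simp [dotProduct, Finset.sum_mul]

lemma gt_S0_form (n : ℕ) (β : ℝ) (ξ1 ξ2 uhat : Fin n → ℝ) :
    (letI C : Matrix (Fin n) (Fin n ⊕ Fin n) ℝ := fromCols 1 0
     letI J : Matrix (Fin n) (Fin n) ℝ := (n : ℝ)⁻¹ • (fun _ _ => (1 : ℝ))
     letI Jp : Matrix (Fin n) (Fin n) ℝ := 1 - J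
     letI z : (Fin n ⊕ Fin n) ⊕ Fin n → ℝ := Sum.elim (Sum.elim ξ1 ξ2) uhat
     z ⬝ᵥ (((-(n : ℝ)⁻¹) • fromBlocks (β • (Cᵀ * Jp * C)) ((1 / 2 : ℝ) • (Cᵀ * J))
           ((1 / 2 : ℝ) • (J * C)) 0) *ᵥ z))
    = -(n:ℝ)⁻¹ * (β * ((∑ i, ξ1 i ^ 2) - (n:ℝ)⁻¹ * (∑ i, ξ1 i) ^ 2)
        + (n:ℝ)⁻¹ * (∑ i, ξ1 i) * (∑ i, uhat i)) := by
  simp only [smul_mulVec, dotProduct_smul, fromBlocks_mulVec, Sum.elim_comp_inl,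
    Sum.elim_comp_inr, ← mulVec_mulVec, sumElim_dotProduct_sumElim, dotProduct_add,
    fromCols_mulVec_sumElim, one_mulVec, zero_mulVec, add_zero, zero_mulVec,
    dotProduct_zero, dotProduct_mulVec, vecMul_transpose, sub_mulVec, gt_J_mulVec,
    dotProduct_sub, gt_dot_const, smul_eq_mul]
  have : ξ1 ⬝ᵥ ξ1 = ∑ i, ξ1 i ^ 2 := by simp [dotProduct, sq]
  rw [this]
  ring

lemma gt_M1_form (n : ℕ) (β lam : ℝ) (ξ1 ξ2 uhat : Fin n → ℝ) :
    (letI C : Matrix (Fin n) (Fin n ⊕ Fin n) ℝ := fromCols 1 0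
     letI M₁ : Matrix (Fin n ⊕ Fin n) (Fin n ⊕ Fin n) ℝ :=
       fromBlocks 0 (β • 1) (β • 1) ((-2 : ℝ) • 1)
     letI E : Matrix (Fin n ⊕ Fin n) ((Fin n ⊕ Fin n) ⊕ Fin n) ℝ := fromBlocks C 0 0 1
     letI z : (Fin n ⊕ Fin n) ⊕ Fin n → ℝ := Sum.elim (Sum.elim ξ1 ξ2) uhat
     z ⬝ᵥ ((lam • (Eᵀ * M₁ * E)) *ᵥ z))
    = lam * (2 * β * (∑ i, ξ1 i * uhat i) - 2 * ∑ i, uhat i ^ 2) := by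
  simp only [smul_mulVec, dotProduct_smul, ← mulVec_mulVec, dotProduct_mulVec,
    vecMul_transpose, fromBlocks_mulVec, Sum.elim_comp_inl, Sum.elim_comp_inr,
    fromCols_mulVec_sumElim, one_mulVec, zero_mulVec, add_zero, zero_add,
    sumElim_dotProduct_sumElim, dotProduct_add, dotProduct_zero,
    smul_eq_mul]
  have h3 : ξ1 ⬝ᵥ uhat = ∑ i, ξ1 i * uhat i := rfl
  have h4 : uhat ⬝ᵥ ξ1 = ∑ i, ξ1 i * uhat i := by
    rw [dotProduct_comm]; rfl
  have h5 : uhat ⬝ᵥ uhat = ∑ i, uhat i ^ 2 := by simp [dotProduct, sq]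
  rw [h3, h4, h5]
  ring

lemma gt_step (n : ℕ) (β η lam : ℝ) (hlam : 0 ≤ lam)
    (P : Matrix (Fin n ⊕ Fin n) (Fin n ⊕ Fin n) ℝ)
    (W : Matrix (Fin n) (Fin n) ℝ)
    (ek dk uk ek1 dk1 : Fin n → ℝ)
    (hstate : fromBlocks W (-η • 1) 0 W *ᵥ Sum.elim ek dk
        + fromRows (-η • 1) (W - 1) *ᵥ uk = Sum.elim ek1 dk1)
    (hcoco : ∀ i, uk i ^ 2 ≤ β * (ek i * uk i))
    (hL :
      (letI A : Matrix (Fin n ⊕ Fin n) (Fin n ⊕ Fin n) ℝ :=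
         fromBlocks W (-η • 1) 0 W
       letI B : Matrix (Fin n ⊕ Fin n) (Fin n) ℝ := fromRows (-η • 1) (W - 1)
       letI C : Matrix (Fin n) (Fin n ⊕ Fin n) ℝ := fromCols 1 0
       letI J : Matrix (Fin n) (Fin n) ℝ := (n : ℝ)⁻¹ • (fun _ _ => (1 : ℝ))
       letI Jp : Matrix (Fin n) (Fin n) ℝ := 1 - J
       letI S₀ : Matrix ((Fin n ⊕ Fin n) ⊕ Fin n) ((Fin n ⊕ Fin n) ⊕ Fin n) ℝ :=
         (-(n : ℝ)⁻¹) • fromBlocks (β • (Cᵀ * Jp * C)) ((1 / 2 : ℝ) • (Cᵀ * J))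
           ((1 / 2 : ℝ) • (J * C)) 0
       letI M₁ : Matrix (Fin n ⊕ Fin n) (Fin n ⊕ Fin n) ℝ :=
         fromBlocks 0 (β • 1) (β • 1) ((-2 : ℝ) • 1)
       letI E : Matrix (Fin n ⊕ Fin n) ((Fin n ⊕ Fin n) ⊕ Fin n) ℝ :=
         fromBlocks C 0 0 1
       letI z : (Fin n ⊕ Fin n) ⊕ Fin n → ℝ := Sum.elim (Sum.elim ek dk) uk
       z ⬝ᵥ
           ((fromBlocks (Aᵀ * P * A - P) (Aᵀ * P * B) (Bᵀ * P * A) (Bᵀ * P * B)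
               - S₀ + lam • (Eᵀ * M₁ * E)) *ᵥ z) ≤ 0)) :
    Sum.elim ek1 dk1 ⬝ᵥ (P *ᵥ Sum.elim ek1 dk1)
      ≤ Sum.elim ek dk ⬝ᵥ (P *ᵥ Sum.elim ek dk)
        - (n:ℝ)⁻¹ * (β * ((∑ i, ek i ^ 2) - (n:ℝ)⁻¹ * (∑ i, ek i) ^ 2)
            + (n:ℝ)⁻¹ * (∑ i, ek i) * (∑ i, uk i)) := by
  rw [Matrix.add_mulVec, Matrix.sub_mulVec, dotProduct_add, dotProduct_sub,
    gt_quad_expand, gt_S0_form n β ek dk uk, gt_M1_form n β lam ek dk uk, hstate] at hL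
  have hc : 0 ≤ lam * (2 * β * (∑ i, ek i * uk i) - 2 * ∑ i, uk i ^ 2) := by
    apply mul_nonneg hlam
    have : ∑ i, uk i ^ 2 ≤ ∑ i, β * (ek i * uk i) := Finset.sum_le_sum fun i _ => hcoco i
    have h2 : ∑ i, β * (ek i * uk i) = β * ∑ i, ek i * uk i := by rw [Finset.mul_sum]
    linarith
  linarith


/-- **Theorem 1** (main LMI-certified `O(1/K)` convergence): if the LMI is
feasible with `P ⪰ 0`, `λ₁ ≥ 0` on the subspace `𝟏ᵀξ̂₂ = 0`, then the
distributed gradient tracking iterates satisfy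
`(1/n) Σᵢ [f₀(x̄ᵢᴷ) − f₀*] ≤ (ξ⁰−ξ*)ᵀP(ξ⁰−ξ*)/(K+1)`. -/
theorem gradient_tracking_O1K_convergence
    (n : ℕ) (hn : 0 < n) (β η : ℝ) (hβ : 0 < β) (hη : 0 < η)
    (W : Matrix (Fin n) (Fin n) ℝ)
    (hWrow : W *ᵥ (fun _ => (1 : ℝ)) = fun _ => (1 : ℝ))
    (hWcol : (fun _ => (1 : ℝ)) ᵥ* W = fun _ => (1 : ℝ))
    (f : Fin n → ℝ → ℝ)
    (hconv : ∀ i, ConvexOn ℝ Set.univ (f i))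
    (hdiff : ∀ i, Differentiable ℝ (f i))
    (hsmooth : ∀ i, ∀ a b : ℝ, |deriv (f i) a - deriv (f i) b| ≤ β * |a - b|)
    (x₀ : ℝ) (hmin : ∀ z : ℝ, ((1 : ℝ) / n) * ∑ i : Fin n, f i x₀
                              ≤ ((1 : ℝ) / n) * ∑ i : Fin n, f i z)
    (x s : ℕ → Fin n → ℝ)
    (hx : ∀ k, x (k + 1) = W *ᵥ x k - η • s k)
    (hs : ∀ k, s (k + 1) =
      W *ᵥ s k + (fun i => deriv (f i) (x (k + 1) i)) - fun i => deriv (f i) (x k i))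
    (hs0 : s 0 = fun i => deriv (f i) (x 0 i))
    (P : Matrix (Fin n ⊕ Fin n) (Fin n ⊕ Fin n) ℝ) (hP : P.PosSemidef)
    (lam : ℝ) (hlam : 0 ≤ lam)
    (hLMI : ∀ (ξ1 ξ2 : Fin n → ℝ) (uhat : Fin n → ℝ), ∑ i : Fin n, ξ2 i = 0 →
      (letI A : Matrix (Fin n ⊕ Fin n) (Fin n ⊕ Fin n) ℝ :=
         fromBlocks W (-η • 1) 0 W
       letI B : Matrix (Fin n ⊕ Fin n) (Fin n) ℝ := fromRows (-η • 1) (W - 1)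
       letI C : Matrix (Fin n) (Fin n ⊕ Fin n) ℝ := fromCols 1 0
       letI J : Matrix (Fin n) (Fin n) ℝ := (n : ℝ)⁻¹ • (fun _ _ => (1 : ℝ))
       letI Jp : Matrix (Fin n) (Fin n) ℝ := 1 - J
       letI S₀ : Matrix ((Fin n ⊕ Fin n) ⊕ Fin n) ((Fin n ⊕ Fin n) ⊕ Fin n) ℝ :=
         (-(n : ℝ)⁻¹) • fromBlocks (β • (Cᵀ * Jp * C)) ((1 / 2 : ℝ) • (Cᵀ * J))
           ((1 / 2 : ℝ) • (J * C)) 0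
       letI M₁ : Matrix (Fin n ⊕ Fin n) (Fin n ⊕ Fin n) ℝ :=
         fromBlocks 0 (β • 1) (β • 1) ((-2 : ℝ) • 1)
       letI E : Matrix (Fin n ⊕ Fin n) ((Fin n ⊕ Fin n) ⊕ Fin n) ℝ :=
         fromBlocks C 0 0 1
       letI z : (Fin n ⊕ Fin n) ⊕ Fin n → ℝ := Sum.elim (Sum.elim ξ1 ξ2) uhat
       z ⬝ᵥ
           ((fromBlocks (Aᵀ * P * A - P) (Aᵀ * P * B) (Bᵀ * P * A) (Bᵀ * P * B)
               - S₀ + lam • (Eᵀ * M₁ * E)) *ᵥ z) ≤ 0)) :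
    ∀ K : ℕ,
      letI ξhat : Fin n ⊕ Fin n → ℝ :=
        Sum.elim (x 0) 0 -
          Sum.elim (fun _ => x₀) (fun i => -(deriv (f i) x₀))
      ((1 : ℝ) / n) *
          ∑ i : Fin n,
            (((1 : ℝ) / n) *
                ∑ j : Fin n,
                  f j ((1 / (K + 1 : ℝ)) * ∑ k ∈ Finset.range (K + 1), x k i)
              - ((1 : ℝ) / n) * ∑ j : Fin n, f j x₀)
        ≤ (ξhat ⬝ᵥ (P *ᵥ ξhat)) / (K + 1 : ℝ) := by
  intro K
  have hν : (0:ℝ) < n := by exact_mod_cast hn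
  have hKpos : (0:ℝ) < (K:ℝ) + 1 := by positivity
  -- optimality of x₀
  have hopt : ∑ i, deriv (f i) x₀ = 0 := by
    have hF : ∀ z, HasDerivAt (fun z => ∑ i : Fin n, f i z) (∑ i : Fin n, deriv (f i) z) z :=
      fun z => HasDerivAt.fun_sum (fun i _ => ((hdiff i) z).hasDerivAt)
    have hmin' : IsLocalMin (fun z => ∑ i : Fin n, f i z) x₀ := by
      apply Filter.Eventually.of_forall
      intro z
      have h1 := hmin z
      have hc : (0:ℝ) < 1 / n := by positivity
      exact le_of_mul_le_mul_left h1 hc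
    have h2 := hmin'.deriv_eq_zero
    rwa [(hF x₀).deriv] at h2
  -- abbreviations
  set e : ℕ → Fin n → ℝ := fun k i => x k i - x₀ with he
  set u : ℕ → Fin n → ℝ := fun k i => deriv (f i) (x k i) - deriv (f i) x₀ with hu
  set d : ℕ → Fin n → ℝ := fun k i => s k i - deriv (f i) (x k i) + deriv (f i) x₀ with hd
  -- column sums of W
  have hWcolsum : ∀ j, ∑ i, W i j = 1 := by
    intro j
    have h1 := congrFun hWcol j
    simpa [vecMul, dotProduct] using h1
  have hWsum : ∀ v : Fin n → ℝ, ∑ i, (W *ᵥ v) i = ∑ j, v j := by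
    intro v
    simp only [mulVec, dotProduct]
    rw [Finset.sum_comm]
    have h1 : ∀ j : Fin n, ∑ i, W i j * v j = v j := by
      intro j
      rw [← Finset.sum_mul, hWcolsum, one_mul]
    rw [Finset.sum_congr rfl fun j _ => h1 j]
  have hWc : ∀ (i : Fin n), (W *ᵥ (fun _ => x₀)) i = x₀ := by
    intro i
    have h1 : (fun _ => x₀ : Fin n → ℝ) = x₀ • (fun _ => (1:ℝ)) := by
      funext j; simp
    rw [h1, Matrix.mulVec_smul, hWrow]
    simp
  -- recursion for d
  have hdnext : ∀ k i, d (k+1) i = (W *ᵥ s k) i - deriv (f i) (x k i) + deriv (f i) x₀ := by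
    intro k i
    have h1 := congrFun (hs k) i
    simp only [Pi.add_apply, Pi.sub_apply] at h1
    simp only [hd]
    rw [h1]
    ring
  have hsumd : ∀ k, ∑ i, d k i = 0 := by
    intro k
    induction k with
    | zero =>
      have h0 : ∀ i, d 0 i = deriv (f i) x₀ := by
        intro i
        simp only [hd, congrFun hs0 i]
        ring
      rw [Finset.sum_congr rfl fun i _ => h0 i]
      exact hopt
    | succ k ih =>
      rw [Finset.sum_congr rfl fun i _ => hdnext k i]
      rw [Finset.sum_add_distrib, Finset.sum_sub_distrib, hWsum]
      have h2 : ∑ i, d k i = (∑ i, s k i) - (∑ i, deriv (f i) (x k i))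
          + ∑ i, deriv (f i) x₀ := by
        simp only [hd]
        rw [Finset.sum_add_distrib, Finset.sum_sub_distrib]
      rw [h2] at ih
      linarith
  -- smul-identity matrices acting on vectors
  have hsm1 : ∀ (c : ℝ) (v : Fin n → ℝ),
      (c • (1 : Matrix (Fin n) (Fin n) ℝ)) *ᵥ v = c • v := by
    intro c v
    rw [smul_mulVec, one_mulVec]
  -- state recursion
  have hstate : ∀ k,
      fromBlocks W (-η • 1) 0 W *ᵥ Sum.elim (e k) (d k)
        + fromRows (-η • 1) (W - 1) *ᵥ u k = Sum.elim (e (k+1)) (d (k+1)) := by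
    intro k
    have hdu : d k + u k = s k := by
      funext i
      simp only [hd, hu, Pi.add_apply]
      ring
    funext j
    rw [fromBlocks_mulVec, fromRows_mulVec]
    cases j with
    | inl i =>
      simp only [Sum.elim_comp_inl, Sum.elim_comp_inr, Pi.add_apply, Sum.elim_inl,
        hsm1, Pi.smul_apply, smul_eq_mul]
      have hxk : x (k+1) i = (W *ᵥ x k) i - η * s k i := by
        have h1 := congrFun (hx k) i
        simpa using h1
      have hek : e k = x k - (fun _ => x₀) := by
        funext i'; simp [he]
      have hWe : (W *ᵥ e k) i = (W *ᵥ x k) i - x₀ := by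
        rw [hek, Matrix.mulVec_sub]
        simp [hWc i]
      have hdui := congrFun hdu i
      simp only [Pi.add_apply] at hdui
      simp only [he]
      rw [hWe, hxk]
      nlinarith [hdui]
    | inr i =>
      simp only [Sum.elim_comp_inl, Sum.elim_comp_inr, Pi.add_apply, Sum.elim_inr,
        Matrix.zero_mulVec, Pi.zero_apply, zero_add, Matrix.sub_mulVec, Matrix.one_mulVec,
        Pi.sub_apply]
      have hWs : (W *ᵥ d k) i + (W *ᵥ u k) i = (W *ᵥ s k) i := by
        rw [← hdu, Matrix.mulVec_add]
        simp
      rw [hdnext k i]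
      simp only [hu]
      linarith [hWs]
  -- Lyapunov function and per-step residual
  set V : ℕ → ℝ := fun k => Sum.elim (e k) (d k) ⬝ᵥ (P *ᵥ Sum.elim (e k) (d k)) with hV
  set rr : ℕ → ℝ := fun k => ((1:ℝ)/n) * ∑ i : Fin n, (((1:ℝ)/n) * ∑ j : Fin n, f j (x k i)
      - ((1:ℝ)/n) * ∑ j : Fin n, f j x₀) with hrr
  have hstep : ∀ k, V (k+1) + rr k ≤ V k := by
    intro k
    have hcoco : ∀ i, u k i ^ 2 ≤ β * (e k i * u k i) := by
      intro i
      have h1 := gt_coco β hβ (f i) (hconv i) (hdiff i) (hsmooth i) (x k i) x₀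
      simpa [hu, he] using h1
    have hq := gt_step n β η lam hlam P W (e k) (d k) (u k) (e (k+1)) (d (k+1))
      (hstate k) hcoco (hLMI (e k) (d k) (u k) (hsumd k))
    have hsc := gt_scalar n hn β hβ f hconv hdiff hsmooth x₀ hopt (x k)
    have hye : ∀ i, x k i - x₀ = e k i := fun i => by simp [he]
    have hyu : ∀ i, deriv (f i) (x k i) - deriv (f i) x₀ = u k i := fun i => by simp [hu]
    have hes : (∑ i, (x k i - x₀) ^ 2) = ∑ i, e k i ^ 2 :=
      Finset.sum_congr rfl fun i _ => by rw [hye i]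
    have hes2 : (∑ i, (x k i - x₀)) = ∑ i, e k i :=
      Finset.sum_congr rfl fun i _ => hye i
    have hus : (∑ i, (deriv (f i) (x k i) - deriv (f i) x₀)) = ∑ i, u k i :=
      Finset.sum_congr rfl fun i _ => hyu i
    rw [hes, hes2, hus] at hsc
    simp only [hV, hrr]
    linarith [hq, hsc]
  -- nonnegativity of V
  have hVnn : ∀ m, 0 ≤ V m := by
    intro m
    have h1 := hP.dotProduct_mulVec_nonneg (Sum.elim (e m) (d m))
    simpa [hV] using h1
  -- telescoping
  have htel : ∀ m : ℕ, (∑ k ∈ Finset.range m, rr k) + V m ≤ V 0 := by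
    intro m
    induction m with
    | zero => simp
    | succ m ih =>
      rw [Finset.sum_range_succ]
      have h1 := hstep m
      linarith
  have hsumr : ∑ k ∈ Finset.range (K+1), rr k ≤ V 0 := by
    have h1 := htel (K+1)
    have h2 := hVnn (K+1)
    linarith
  -- identify ξhat with the initial state
  have hxi : (Sum.elim (x 0) 0 -
      Sum.elim (fun _ => x₀) (fun i => -(deriv (f i) x₀)) : Fin n ⊕ Fin n → ℝ)
      = Sum.elim (e 0) (d 0) := by
    funext j
    cases j with
    | inl i => simp [he]
    | inr i =>
      simp only [Pi.sub_apply, Sum.elim_inr, hd, congrFun hs0 i, Pi.zero_apply]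
      ring
  -- Jensen step
  have hJ : ∀ i : Fin n,
      ((1:ℝ)/n) * ∑ j : Fin n, f j ((1/((K:ℝ)+1)) * ∑ k ∈ Finset.range (K+1), x k i)
        - ((1:ℝ)/n) * ∑ j : Fin n, f j x₀
      ≤ (1/((K:ℝ)+1)) * ∑ k ∈ Finset.range (K+1),
          (((1:ℝ)/n) * ∑ j : Fin n, f j (x k i) - ((1:ℝ)/n) * ∑ j : Fin n, f j x₀) := by
    intro i
    have h1 : ∀ j : Fin n,
        f j ((1/((K:ℝ)+1)) * ∑ k ∈ Finset.range (K+1), x k i)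
          ≤ (1/((K:ℝ)+1)) * ∑ k ∈ Finset.range (K+1), f j (x k i) :=
      fun j => gt_jensen (f j) (hconv j) (hdiff j) K (fun k => x k i)
    have h2 : ((1:ℝ)/n) * ∑ j : Fin n, f j ((1/((K:ℝ)+1)) * ∑ k ∈ Finset.range (K+1), x k i)
        ≤ ((1:ℝ)/n) * ∑ j : Fin n, ((1/((K:ℝ)+1)) * ∑ k ∈ Finset.range (K+1), f j (x k i)) :=
      mul_le_mul_of_nonneg_left (Finset.sum_le_sum fun j _ => h1 j) (by positivity)
    have h3 : ∑ j : Fin n, ((1/((K:ℝ)+1)) * ∑ k ∈ Finset.range (K+1), f j (x k i))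
        = (1/((K:ℝ)+1)) * ∑ k ∈ Finset.range (K+1), ∑ j : Fin n, f j (x k i) := by
      rw [← Finset.mul_sum, Finset.sum_comm]
    have h4 : ∑ k ∈ Finset.range (K+1),
        (((1:ℝ)/n) * ∑ j : Fin n, f j (x k i) - ((1:ℝ)/n) * ∑ j : Fin n, f j x₀)
        = ((1:ℝ)/n) * (∑ k ∈ Finset.range (K+1), ∑ j : Fin n, f j (x k i))
          - ((K:ℝ)+1) * (((1:ℝ)/n) * ∑ j : Fin n, f j x₀) := by
      rw [Finset.sum_sub_distrib, ← Finset.mul_sum, Finset.sum_const, Finset.card_range,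
        nsmul_eq_mul]
      push_cast; ring
    rw [h3] at h2
    rw [h4]
    set T : ℝ := ∑ k ∈ Finset.range (K+1), ∑ j : Fin n, f j (x k i) with hT
    set c : ℝ := ((1:ℝ)/n) * ∑ j : Fin n, f j x₀ with hc
    have h5 : (1/((K:ℝ)+1)) * (((K:ℝ)+1) * c) = c := by field_simp
    have h6 : ((1:ℝ)/n) * ((1/((K:ℝ)+1)) * T) = (1/((K:ℝ)+1)) * (((1:ℝ)/n) * T) := by ring
    have h7 : (1/((K:ℝ)+1)) * (((1:ℝ)/n) * T - ((K:ℝ)+1) * c)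
        = (1/((K:ℝ)+1)) * (((1:ℝ)/n) * T) - c := by
      rw [mul_sub, h5]
    rw [h7]
    linarith [h2, h6.le, h6.ge]
  -- final assembly
  show ((1:ℝ)/n) * ∑ i : Fin n, (((1:ℝ)/n) *
        ∑ j : Fin n, f j ((1 / ((K:ℝ) + 1)) * ∑ k ∈ Finset.range (K + 1), x k i)
      - ((1:ℝ)/n) * ∑ j : Fin n, f j x₀)
    ≤ ((Sum.elim (x 0) 0 - Sum.elim (fun _ => x₀) (fun i => -(deriv (f i) x₀)))
        ⬝ᵥ (P *ᵥ (Sum.elim (x 0) 0 - Sum.elim (fun _ => x₀) (fun i => -(deriv (f i) x₀)))))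
      / ((K:ℝ) + 1)
  rw [hxi]
  have hstep2 : ((1:ℝ)/n) * ∑ i : Fin n, (((1:ℝ)/n) *
        ∑ j : Fin n, f j ((1 / ((K:ℝ) + 1)) * ∑ k ∈ Finset.range (K + 1), x k i)
      - ((1:ℝ)/n) * ∑ j : Fin n, f j x₀)
      ≤ ((1:ℝ)/n) * ∑ i : Fin n, ((1/((K:ℝ)+1)) * ∑ k ∈ Finset.range (K+1),
          (((1:ℝ)/n) * ∑ j : Fin n, f j (x k i) - ((1:ℝ)/n) * ∑ j : Fin n, f j x₀)) :=
    mul_le_mul_of_nonneg_left (Finset.sum_le_sum fun i _ => hJ i) (by positivity)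
  have hswap : ((1:ℝ)/n) * ∑ i : Fin n, ((1/((K:ℝ)+1)) * ∑ k ∈ Finset.range (K+1),
        (((1:ℝ)/n) * ∑ j : Fin n, f j (x k i) - ((1:ℝ)/n) * ∑ j : Fin n, f j x₀))
      = (1/((K:ℝ)+1)) * ∑ k ∈ Finset.range (K+1), rr k := by
    simp only [hrr]
    rw [← Finset.mul_sum, ← Finset.mul_sum, Finset.sum_comm]
    ring
  have hfin : (1/((K:ℝ)+1)) * ∑ k ∈ Finset.range (K+1), rr k ≤ (1/((K:ℝ)+1)) * V 0 :=
    mul_le_mul_of_nonneg_left hsumr (by positivity)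
  have hVdiv : (1/((K:ℝ)+1)) * V 0 = V 0 / ((K:ℝ)+1) := by ring
  calc ((1:ℝ)/n) * ∑ i : Fin n, (((1:ℝ)/n) *
        ∑ j : Fin n, f j ((1 / ((K:ℝ) + 1)) * ∑ k ∈ Finset.range (K + 1), x k i)
      - ((1:ℝ)/n) * ∑ j : Fin n, f j x₀)
      ≤ (1/((K:ℝ)+1)) * ∑ k ∈ Finset.range (K+1), rr k := by rw [← hswap]; exact hstep2
    _ ≤ (1/((K:ℝ)+1)) * V 0 := hfin
    _ = V 0 / ((K:ℝ)+1) := hVdiv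
end

section
/- Suppose the same LMI as in the scalar (d = 1) case is feasible, i.e., there exist a positive semidefinite P ∈ ℝ^{2n×2n} and λ₁ ≥ 0 such that for every ξ̂ = (ξ̂₁, ξ̂₂) ∈ ℝ^n × ℝ^n with 𝟏ᵀξ̂₂ = 0 and every û ∈ ℝ^n, [ξ̂; û]ᵀ ( [[AᵀPA − P, AᵀPB], [BᵀPA, BᵀPB]] − S_0 + λ₁·[[C, 0], [0, I_n]]ᵀ M_1 [[C, 0], [0, I_n]] ) [ξ̂; û] ≤ 0, where A := [[W, −η·I_n], [0, W]], B := [[−η·I_n], [W − I_n]], C := [I_n, 0], S_0 := −(1/n)·[[β·Cᵀ J_⊥ C, Cᵀ J/2], [J C/2, 0]], and M_1 := [[0, β·I_n], [β·I_n, −2·I_n]]. Let d ≥ 1, let each f_i : ℝ^d → ℝ be convex and differentiable with β-Lipschitz gradient, let f_0 := (1/n)·Σ_{i=1}^n f_i have a minimizer x_0* ∈ ℝ^d with optimal value f_0*, and let x_i^k, s_i^k ∈ ℝ^d evolve as x_i^{k+1} = Σ_{j=1}^n W_{ij} x_j^k − η s_i^k and s_i^{k+1} = Σ_{j=1}^n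 W_{ij} s_j^k + ∇f_i(x_i^{k+1}) − ∇f_i(x_i^k) with s_i^0 = ∇f_i(x_i^0). Then for every K ≥ 0, (1/n)·Σ_{i=1}^n [f_0(x̄_i^K) − f_0*] ≤ (ξ^0 − ξ*)ᵀ (P ⊗ I_d) (ξ^0 − ξ*)/(K+1), where x̄_i^K := (1/(K+1))·Σ_{k=0}^K x_i^k, ξ^0 is the stacked vector of (x_i^0)_{i=1}^n followed by (s_i^0 − ∇f_i(x_i^0))_{i=1}^n in ℝ^{2nd}, and ξ* is the stacked vector consisting of n copies of x_0* followed by (−∇f_i(x_0*))_{i=1}^n. -/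
open Matrix Kronecker

local notation "⟪" x ", " y "⟫" => @inner ℝ _ _ x y



section AuxAnalysis
variable {dd : ℕ}
local notation "E" => EuclideanSpace ℝ (Fin dd)

lemma aux_line_hasDerivAt (f : E → ℝ) (hf : Differentiable ℝ f) (x v : E) (t : ℝ) :
    HasDerivAt (fun t : ℝ => f (x + t • v)) ⟪gradient f (x + t • v), v⟫ t := by
  have hline : HasDerivAt (fun t : ℝ => x + t • v) v t := by
    simpa using ((hasDerivAt_id t).smul_const v).const_add x
  have hfd := (hf (x + t • v)).hasGradientAt.hasFDerivAt
  have h2 := hfd.comp_hasDerivAt t hline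
  simpa [Function.comp_def, InnerProductSpace.toDual_apply_apply] using h2

lemma aux_convex_lower (f : E → ℝ) (hc : ConvexOn ℝ Set.univ f) (hf : Differentiable ℝ f)
    (x y : E) : f x + ⟪gradient f x, y - x⟫ ≤ f y := by
  set v := y - x with hv
  have hconv : ConvexOn ℝ Set.univ (fun t : ℝ => f (x + t • v)) := by
    have h := hc.comp_affineMap (AffineMap.lineMap x y : ℝ →ᵃ[ℝ] E)
    have heq : (fun t : ℝ => f (x + t • v)) = (f ∘ (AffineMap.lineMap x y : ℝ →ᵃ[ℝ] E)) := by
      funext t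
      simp only [Function.comp_apply, AffineMap.lineMap_apply_module]
      congr 1
      module
    rw [heq]
    simpa using h
  have hder : ∀ t : ℝ, HasDerivAt (fun t : ℝ => f (x + t • v)) ⟪gradient f (x + t • v), v⟫ t :=
    fun t => aux_line_hasDerivAt f hf x v t
  have hd0 := (hder 0).deriv
  have hslope := hconv.deriv_le_slope (Set.mem_univ (0:ℝ)) (Set.mem_univ (1:ℝ)) one_pos
    ((hder 0).differentiableAt)
  rw [hd0, slope_def_field] at hslope
  have h0 : x + (0:ℝ) • v = x := by simp
  have h1 : x + (1:ℝ) • v = y := by simp [hv]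
  rw [h0, h1] at hslope
  have : ⟪gradient f x, v⟫ ≤ f y - f x := by
    simpa using hslope
  linarith

lemma aux_descent (f : E → ℝ) (hf : Differentiable ℝ f) {β : ℝ}
    (hL : ∀ a b : E, ‖gradient f a - gradient f b‖ ≤ β * ‖a - b‖) (x y : E) :
    f y ≤ f x + ⟪gradient f x, y - x⟫ + β / 2 * ‖y - x‖ ^ 2 := by
  set v := y - x with hv
  set ψ : ℝ → ℝ := fun t => f x + t * ⟪gradient f x, v⟫ + β / 2 * t ^ 2 * ‖v‖ ^ 2
      - f (x + t • v) with hψ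
  have hder : ∀ t : ℝ, HasDerivAt ψ
      (⟪gradient f x, v⟫ + β * t * ‖v‖ ^ 2 - ⟪gradient f (x + t • v), v⟫) t := by
    intro t
    have h1 : HasDerivAt (fun t : ℝ => f x + t * ⟪gradient f x, v⟫ + β / 2 * t ^ 2 * ‖v‖ ^ 2)
        (⟪gradient f x, v⟫ + β * t * ‖v‖ ^ 2) t := by
      have ha : HasDerivAt (fun t : ℝ => t * ⟪gradient f x, v⟫) ⟪gradient f x, v⟫ t := by
        simpa using (hasDerivAt_id t).mul_const ⟪gradient f x, v⟫
      have hb : HasDerivAt (fun t : ℝ => β / 2 * t ^ 2 * ‖v‖ ^ 2) (β * t * ‖v‖ ^ 2) t := by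
        have := ((hasDerivAt_pow 2 t).const_mul (β / 2)).mul_const (‖v‖ ^ 2)
        exact this.congr_deriv (by push_cast; ring)
      simpa [mul_comm, Pi.add_def] using (ha.const_add (f x)).add hb
    simpa [hψ, Pi.sub_def] using h1.sub (aux_line_hasDerivAt f hf x v t)
  have hmono : MonotoneOn ψ (Set.Icc (0:ℝ) 1) := by
    apply monotoneOn_of_deriv_nonneg (convex_Icc 0 1)
    · exact (HasDerivAt.continuousOn (fun t _ => hder t))
    · intro t ht
      exact (hder t).differentiableAt.differentiableWithinAt
    · intro t ht
      rw [interior_Icc] at ht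
      rw [(hder t).deriv]
      have hcs : ⟪gradient f (x + t • v) - gradient f x, v⟫ ≤ β * t * ‖v‖ ^ 2 := by
        calc ⟪gradient f (x + t • v) - gradient f x, v⟫
            ≤ ‖gradient f (x + t • v) - gradient f x‖ * ‖v‖ := real_inner_le_norm _ _
          _ ≤ (β * ‖(x + t • v) - x‖) * ‖v‖ :=
              mul_le_mul_of_nonneg_right (hL _ _) (norm_nonneg v)
          _ = β * t * ‖v‖ ^ 2 := by
              have : ‖(x + t • v) - x‖ = t * ‖v‖ := by
                simp [norm_smul, abs_of_pos ht.1]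
              rw [this]; ring
      have hin : ⟪gradient f (x + t • v), v⟫ = ⟪gradient f x, v⟫ +
          ⟪gradient f (x + t • v) - gradient f x, v⟫ := by
        rw [← inner_add_left, add_sub_cancel]
      linarith [hcs, hin.le, hin.ge]
  have h01 := hmono (Set.mem_Icc.2 ⟨le_refl 0, zero_le_one⟩) (Set.mem_Icc.2 ⟨zero_le_one, le_refl 1⟩) zero_le_one
  have hψ0 : ψ 0 = 0 := by simp [hψ]
  have hψ1 : ψ 1 = f x + ⟪gradient f x, v⟫ + β / 2 * ‖v‖ ^ 2 - f y := by
    simp [hψ, hv]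
  rw [hψ0, hψ1] at h01
  linarith

end AuxAnalysis



section Aux2
variable {dd : ℕ}
local notation "E" => EuclideanSpace ℝ (Fin dd)


lemma aux_inner_coords (a b : E) : ⟪a, b⟫ = ∑ l, a l * b l := by
  simp [PiLp.inner_apply, RCLike.inner_apply, conj_trivial, mul_comm]

lemma aux_lower_quad (f : E → ℝ) (hc : ConvexOn ℝ Set.univ f) (hf : Differentiable ℝ f)
    {β : ℝ} (hβ : 0 < β)
    (hL : ∀ a b : E, ‖gradient f a - gradient f b‖ ≤ β * ‖a - b‖) (a b : E) :
    f a + ⟪gradient f a, b - a⟫ + (2 * β)⁻¹ * ‖gradient f b - gradient f a‖ ^ 2 ≤ f b := by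
  set ga := gradient f a
  set gb := gradient f b
  set z := b - β⁻¹ • (gb - ga) with hz
  have h1 := aux_convex_lower f hc hf a z
  have h2 := aux_descent f hf hL b z
  have e1 : ⟪ga, z - a⟫ = ⟪ga, b - a⟫ - β⁻¹ * ⟪ga, gb - ga⟫ := by
    rw [hz]
    rw [show b - β⁻¹ • (gb - ga) - a = (b - a) - β⁻¹ • (gb - ga) by abel]
    rw [inner_sub_right, real_inner_smul_right]
  have e2 : ⟪gb, z - b⟫ = -(β⁻¹ * ⟪gb, gb - ga⟫) := by
    rw [hz, show b - β⁻¹ • (gb - ga) - b = -(β⁻¹ • (gb - ga)) by abel]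
    rw [inner_neg_right, real_inner_smul_right]
  have e3 : ‖z - b‖ ^ 2 = β⁻¹ ^ 2 * ‖gb - ga‖ ^ 2 := by
    rw [hz, show b - β⁻¹ • (gb - ga) - b = -(β⁻¹ • (gb - ga)) by abel]
    rw [norm_neg, norm_smul]
    rw [Real.norm_eq_abs, abs_of_pos (by positivity)]
    ring
  rw [e1] at h1
  rw [e2, e3] at h2
  have e4 : ⟪gb, gb - ga⟫ - ⟪ga, gb - ga⟫ = ‖gb - ga‖ ^ 2 := by
    rw [← inner_sub_left, real_inner_self_eq_norm_sq]
  have hβ' : (0:ℝ) < β⁻¹ := by positivity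
  have hrw : β / 2 * (β⁻¹ ^ 2 * ‖gb - ga‖ ^ 2) = (2 * β)⁻¹ * ‖gb - ga‖ ^ 2 := by
    field_simp
  rw [hrw] at h2
  have e4b : β⁻¹ * ⟪gb, gb - ga⟫ - β⁻¹ * ⟪ga, gb - ga⟫ = β⁻¹ * ‖gb - ga‖ ^ 2 := by
    rw [← mul_sub, e4]
  have hhalf : β⁻¹ * ‖gb - ga‖ ^ 2 = 2 * ((2 * β)⁻¹ * ‖gb - ga‖ ^ 2) := by
    field_simp
  linarith

lemma aux_cocoercive (f : E → ℝ) (hc : ConvexOn ℝ Set.univ f) (hf : Differentiable ℝ f)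
    {β : ℝ} (hβ : 0 < β)
    (hL : ∀ a b : E, ‖gradient f a - gradient f b‖ ≤ β * ‖a - b‖) (a b : E) :
    ‖gradient f a - gradient f b‖ ^ 2 ≤ β * ⟪a - b, gradient f a - gradient f b⟫ := by
  have k1 := aux_lower_quad f hc hf hβ hL a b
  have k2 := aux_lower_quad f hc hf hβ hL b a
  have e1 : ⟪gradient f a, b - a⟫ + ⟪gradient f b, a - b⟫
      = -⟪a - b, gradient f a - gradient f b⟫ := by
    simp only [aux_inner_coords, PiLp.sub_apply]
    rw [← Finset.sum_add_distrib, ← Finset.sum_neg_distrib]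
    apply Finset.sum_congr rfl
    intro l _
    ring
  have e2 : ‖gradient f a - gradient f b‖ = ‖gradient f b - gradient f a‖ := by
    rw [← norm_neg]; congr 1; abel
  rw [e2] at k2
  have hhalf : (2 * β)⁻¹ + (2 * β)⁻¹ = β⁻¹ := by
    rw [← two_mul, mul_inv, ← mul_assoc, mul_inv_cancel₀ two_ne_zero, one_mul]
  have hsum : β⁻¹ * ‖gradient f b - gradient f a‖ ^ 2
      ≤ ⟪a - b, gradient f a - gradient f b⟫ := by nlinarith [k1, k2, e1, hhalf]
  have := mul_le_mul_of_nonneg_left hsum hβ.le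
  rw [← mul_assoc, mul_inv_cancel₀ hβ.ne', one_mul] at this
  rw [e2]
  exact this

lemma aux_sum_apply {ι : Type*} (t : Finset ι) (v : ι → E) (l : Fin dd) :
    (∑ i ∈ t, v i) l = ∑ i ∈ t, v i l := by
  classical
  induction t using Finset.cons_induction with
  | empty => simp
  | cons a s ha ih => rw [Finset.sum_cons, Finset.sum_cons, PiLp.add_apply, ih]

lemma aux_norm_coords (a : E) : ‖a‖ ^ 2 = ∑ l, (a l) ^ 2 := by
  rw [← real_inner_self_eq_norm_sq, aux_inner_coords]
  simp [sq]

end Aux2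


lemma aux_dot_tmul {m p q r : Type*} [Fintype m] [Fintype p] [Fintype q] [Fintype r]
    (X : Matrix p m ℝ) (Pm : Matrix p q ℝ) (Y : Matrix q r ℝ) (v : m → ℝ) (w : r → ℝ) :
    v ⬝ᵥ ((Xᵀ * Pm * Y) *ᵥ w) = (X *ᵥ v) ⬝ᵥ (Pm *ᵥ (Y *ᵥ w)) := by
  rw [← mulVec_mulVec, ← mulVec_mulVec, dotProduct_mulVec, vecMul_transpose]

lemma aux_dot_tmul2 {m p q : Type*} [Fintype m] [Fintype p] [Fintype q]
    (X : Matrix p m ℝ) (Pm : Matrix p q ℝ) (v : m → ℝ) (w : q → ℝ) :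
    v ⬝ᵥ ((Xᵀ * Pm) *ᵥ w) = (X *ᵥ v) ⬝ᵥ (Pm *ᵥ w) := by
  rw [← mulVec_mulVec, dotProduct_mulVec, vecMul_transpose]

lemma aux_quad {m p : Type*} [Fintype m] [Fintype p]
    (A : Matrix m m ℝ) (B : Matrix m p ℝ) (Pm : Matrix m m ℝ) (ξ : m → ℝ) (u : p → ℝ) :
    Sum.elim ξ u ⬝ᵥ (fromBlocks (Aᵀ * Pm * A - Pm) (Aᵀ * Pm * B) (Bᵀ * Pm * A) (Bᵀ * Pm * B)
        *ᵥ Sum.elim ξ u)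
      = (A *ᵥ ξ + B *ᵥ u) ⬝ᵥ (Pm *ᵥ (A *ᵥ ξ + B *ᵥ u)) - ξ ⬝ᵥ (Pm *ᵥ ξ) := by
  rw [fromBlocks_mulVec, sumElim_dotProduct_sumElim, sub_mulVec, dotProduct_add,
    dotProduct_sub, dotProduct_add,
    aux_dot_tmul A Pm A, aux_dot_tmul A Pm B, aux_dot_tmul B Pm A, aux_dot_tmul B Pm B,
    mulVec_add, dotProduct_add, add_dotProduct, add_dotProduct]
  simp only [Sum.elim_comp_inl, Sum.elim_comp_inr]
  ring

lemma aux_kron {m : Type*} [Fintype m] [DecidableEq m] {dd : ℕ} (P : Matrix m m ℝ)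
    (v : m × Fin dd → ℝ) :
    v ⬝ᵥ ((P ⊗ₖ (1 : Matrix (Fin dd) (Fin dd) ℝ)) *ᵥ v)
      = ∑ l : Fin dd, (fun p => v (p, l)) ⬝ᵥ (P *ᵥ fun p => v (p, l)) := by
  simp only [Matrix.mulVec, dotProduct, kroneckerMap_apply, Matrix.one_apply,
    Fintype.sum_prod_type, mul_ite, ite_mul, mul_one, mul_zero, zero_mul, one_mul,
    Finset.sum_ite_eq, Finset.sum_ite_eq', Finset.mem_univ, if_true]
  rw [Finset.sum_comm]


section Sexp
set_option maxHeartbeats 1000000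
variable (nn : ℕ) (β : ℝ)

lemma aux_S0 (ξ1 ξ2 u : Fin nn → ℝ) :
    (Sum.elim (Sum.elim ξ1 ξ2) u) ⬝ᵥ
      (letI C : Matrix (Fin nn) (Fin nn ⊕ Fin nn) ℝ := fromCols 1 0
       letI J : Matrix (Fin nn) (Fin nn) ℝ := (nn : ℝ)⁻¹ • (fun _ _ => (1 : ℝ))
       letI Jp : Matrix (Fin nn) (Fin nn) ℝ := 1 - J
       letI S₀ : Matrix ((Fin nn ⊕ Fin nn) ⊕ Fin nn) ((Fin nn ⊕ Fin nn) ⊕ Fin nn) ℝ :=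
         (-(nn : ℝ)⁻¹) • fromBlocks (β • (Cᵀ * Jp * C)) ((1 / 2 : ℝ) • (Cᵀ * J))
           ((1 / 2 : ℝ) • (J * C)) 0
       S₀ *ᵥ (Sum.elim (Sum.elim ξ1 ξ2) u))
    = -(nn : ℝ)⁻¹ * (β * ((∑ i, (ξ1 i) ^ 2) - (nn : ℝ)⁻¹ * (∑ i, ξ1 i) ^ 2)
        + (nn : ℝ)⁻¹ * (∑ i, ξ1 i) * (∑ i, u i)) := by
  rw [smul_mulVec, dotProduct_smul, smul_eq_mul]
  congr 1
  have hJ : ∀ v : Fin nn → ℝ,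
      (((nn : ℝ)⁻¹ • (fun _ _ => (1:ℝ)) : Matrix (Fin nn) (Fin nn) ℝ) *ᵥ v)
        = fun _ => (nn : ℝ)⁻¹ * ∑ j, v j := by
    intro v
    funext i
    have : ∀ x, (((nn : ℝ)⁻¹ • (fun _ _ => (1:ℝ)) : Matrix (Fin nn) (Fin nn) ℝ)) i x
        = (nn : ℝ)⁻¹ := by
      intro x
      show (nn : ℝ)⁻¹ • (1:ℝ) = (nn : ℝ)⁻¹
      simp
    simp [Matrix.mulVec, dotProduct, this, Finset.mul_sum]
  rw [fromBlocks_mulVec, sumElim_dotProduct_sumElim]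
  simp only [Sum.elim_comp_inl, Sum.elim_comp_inr, smul_mulVec, dotProduct_smul,
    zero_mulVec, add_zero, dotProduct_add]
  rw [aux_dot_tmul, aux_dot_tmul2, ← mulVec_mulVec]
  simp only [fromCols_mulVec_sumElim, one_mulVec, zero_mulVec, add_zero, sub_mulVec,
    one_mulVec, hJ]
  simp only [dotProduct, Pi.sub_apply, smul_eq_mul, mul_sub, Finset.sum_sub_distrib]
  rw [← Finset.sum_mul, ← Finset.sum_mul, ← Finset.sum_mul]
  have hsq : ∑ i, ξ1 i * ξ1 i = ∑ i, (ξ1 i)^2 := by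
    apply Finset.sum_congr rfl; intro i _; ring
  rw [hsq]
  ring
end Sexp



section More
variable (nn : ℕ) (β : ℝ)

lemma aux_EME (ξ1 ξ2 u : Fin nn → ℝ) :
    letI C : Matrix (Fin nn) (Fin nn ⊕ Fin nn) ℝ := fromCols 1 0
    letI M₁ : Matrix (Fin nn ⊕ Fin nn) (Fin nn ⊕ Fin nn) ℝ :=
      fromBlocks 0 (β • 1) (β • 1) ((-2 : ℝ) • 1)
    letI E : Matrix (Fin nn ⊕ Fin nn) ((Fin nn ⊕ Fin nn) ⊕ Fin nn) ℝ := fromBlocks C 0 0 1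
    (Sum.elim (Sum.elim ξ1 ξ2) u) ⬝ᵥ ((Eᵀ * M₁ * E) *ᵥ (Sum.elim (Sum.elim ξ1 ξ2) u))
      = 2 * β * (∑ i, ξ1 i * u i) - 2 * ∑ i, (u i) ^ 2 := by
  rw [aux_dot_tmul]
  simp only [fromBlocks_mulVec, Sum.elim_comp_inl, Sum.elim_comp_inr,
    fromCols_mulVec_sumElim, one_mulVec, zero_mulVec, zero_add, add_zero,
    smul_mulVec, sumElim_dotProduct_sumElim, dotProduct_add, dotProduct_smul,
    smul_eq_mul]
  simp only [dotProduct]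
  have h1 : ∑ i, u i * ξ1 i = ∑ i, ξ1 i * u i := by
    apply Finset.sum_congr rfl; intro i _; ring
  have h2 : ∑ i, u i * u i = ∑ i, (u i)^2 := by
    apply Finset.sum_congr rfl; intro i _; ring
  rw [h1, h2]
  ring

lemma aux_AB (η : ℝ) (W : Matrix (Fin nn) (Fin nn) ℝ) (a b u : Fin nn → ℝ) :
    (fromBlocks W (-η • 1) 0 W) *ᵥ (Sum.elim a b) + (fromRows (-η • 1) (W - 1)) *ᵥ u
      = Sum.elim (fun i => (∑ j, W i j * a j) - η * b i - η * u i)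
          (fun i => (∑ j, W i j * b j) + ((∑ j, W i j * u j) - u i)) := by
  funext p
  rcases p with i | i <;>
    simp [fromBlocks_mulVec, fromRows_mulVec, smul_mulVec, one_mulVec, sub_mulVec,
      Matrix.mulVec, dotProduct, Pi.add_apply, Pi.smul_apply, smul_eq_mul, Pi.sub_apply,
      Matrix.one_apply, mul_ite, mul_one, mul_zero, ite_mul, zero_mul,
      Finset.sum_ite_eq, Finset.sum_ite_eq', Finset.mem_univ, if_true] <;>
    ring

lemma aux_pairsq (a : Fin nn → ℝ) :
    ∑ i, ∑ j, (a j - a i) ^ 2 = 2 * nn * (∑ i, (a i) ^ 2) - 2 * (∑ i, a i) ^ 2 := by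
  have hinner : ∀ i, ∑ j, (a j - a i)^2
      = (∑ j, (a j)^2) - 2 * a i * (∑ j, a j) + nn * (a i)^2 := by
    intro i
    calc ∑ j, (a j - a i)^2 = ∑ j, ((a j)^2 - 2 * a i * a j + (a i)^2) :=
          Finset.sum_congr rfl (by intros; ring)
      _ = (∑ j, (a j)^2) - 2 * a i * (∑ j, a j) + nn * (a i)^2 := by
          rw [Finset.sum_add_distrib, Finset.sum_sub_distrib, ← Finset.mul_sum,
            Finset.sum_const, Finset.card_univ, nsmul_eq_mul, Fintype.card_fin]
  calc ∑ i, ∑ j, (a j - a i)^2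
      = ∑ i, ((∑ j, (a j)^2) - 2 * a i * (∑ j, a j) + nn * (a i)^2) :=
        Finset.sum_congr rfl (fun i _ => hinner i)
    _ = 2 * nn * (∑ i, (a i) ^ 2) - 2 * (∑ i, a i) ^ 2 := by
        rw [Finset.sum_add_distrib, Finset.sum_sub_distrib, Finset.sum_const,
          Finset.card_univ, Fintype.card_fin, nsmul_eq_mul, ← Finset.sum_mul,
          ← Finset.mul_sum]
        rw [← Finset.mul_sum]
        ring

end More


set_option maxHeartbeats 1600000 in
/-- **Section IV-C generalization of Theorem 1** (lossless dimensionality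
reduction): feasibility of the scalar (`d = 1`) LMI certifies the `O(1/K)`
convergence of distributed gradient tracking in any dimension `d ≥ 1`, with
Lyapunov matrix `P ⊗ I_d`. -/
theorem gradient_tracking_O1K_convergence_dim_d
    (n d : ℕ) (hn : 0 < n) (hd : 1 ≤ d) (β η : ℝ) (hβ : 0 < β) (hη : 0 < η)
    (W : Matrix (Fin n) (Fin n) ℝ)
    (hWrow : W *ᵥ (fun _ => (1 : ℝ)) = fun _ => (1 : ℝ))
    (hWcol : (fun _ => (1 : ℝ)) ᵥ* W = fun _ => (1 : ℝ))
    (P : Matrix (Fin n ⊕ Fin n) (Fin n ⊕ Fin n) ℝ) (hP : P.PosSemidef)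
    (lam : ℝ) (hlam : 0 ≤ lam)
    (hLMI : ∀ (ξ1 ξ2 : Fin n → ℝ) (uhat : Fin n → ℝ), ∑ i : Fin n, ξ2 i = 0 →
      (letI A : Matrix (Fin n ⊕ Fin n) (Fin n ⊕ Fin n) ℝ :=
         fromBlocks W (-η • 1) 0 W
       letI B : Matrix (Fin n ⊕ Fin n) (Fin n) ℝ := fromRows (-η • 1) (W - 1)
       letI C : Matrix (Fin n) (Fin n ⊕ Fin n) ℝ := fromCols 1 0
       letI J : Matrix (Fin n) (Fin n) ℝ := (n : ℝ)⁻¹ • (fun _ _ => (1 : ℝ))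
       letI Jp : Matrix (Fin n) (Fin n) ℝ := 1 - J
       letI S₀ : Matrix ((Fin n ⊕ Fin n) ⊕ Fin n) ((Fin n ⊕ Fin n) ⊕ Fin n) ℝ :=
         (-(n : ℝ)⁻¹) • fromBlocks (β • (Cᵀ * Jp * C)) ((1 / 2 : ℝ) • (Cᵀ * J))
           ((1 / 2 : ℝ) • (J * C)) 0
       letI M₁ : Matrix (Fin n ⊕ Fin n) (Fin n ⊕ Fin n) ℝ :=
         fromBlocks 0 (β • 1) (β • 1) ((-2 : ℝ) • 1)
       letI E : Matrix (Fin n ⊕ Fin n) ((Fin n ⊕ Fin n) ⊕ Fin n) ℝ :=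
         fromBlocks C 0 0 1
       letI z : (Fin n ⊕ Fin n) ⊕ Fin n → ℝ := Sum.elim (Sum.elim ξ1 ξ2) uhat
       z ⬝ᵥ
           ((fromBlocks (Aᵀ * P * A - P) (Aᵀ * P * B) (Bᵀ * P * A) (Bᵀ * P * B)
               - S₀ + lam • (Eᵀ * M₁ * E)) *ᵥ z) ≤ 0))
    (f : Fin n → EuclideanSpace ℝ (Fin d) → ℝ)
    (hconv : ∀ i, ConvexOn ℝ Set.univ (f i))
    (hdiff : ∀ i, Differentiable ℝ (f i))
    (hsmooth : ∀ i, ∀ a b : EuclideanSpace ℝ (Fin d),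
      ‖gradient (f i) a - gradient (f i) b‖ ≤ β * ‖a - b‖)
    (xs : EuclideanSpace ℝ (Fin d))
    (hmin : ∀ z : EuclideanSpace ℝ (Fin d),
      ((1 : ℝ) / n) * ∑ i : Fin n, f i xs ≤ ((1 : ℝ) / n) * ∑ i : Fin n, f i z)
    (x s : ℕ → Fin n → EuclideanSpace ℝ (Fin d))
    (hx : ∀ k, ∀ i, x (k + 1) i = (∑ j : Fin n, W i j • x k j) - η • s k i)
    (hs : ∀ k, ∀ i, s (k + 1) i =
      (∑ j : Fin n, W i j • s k j) + gradient (f i) (x (k + 1) i)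
        - gradient (f i) (x k i))
    (hs0 : ∀ i, s 0 i = gradient (f i) (x 0 i)) :
    ∀ K : ℕ,
      letI ξhat : (Fin n ⊕ Fin n) × Fin d → ℝ := fun pd =>
        Sum.elim
          (fun i => x 0 i pd.2 - xs pd.2)
          (fun i => (s 0 i - gradient (f i) (x 0 i)) pd.2
                      - (-(gradient (f i) xs pd.2)))
          pd.1
      ((1 : ℝ) / n) *
          ∑ i : Fin n,
            (((1 : ℝ) / n) *
                ∑ j : Fin n,
                  f j ((1 / (K + 1 : ℝ)) • ∑ k ∈ Finset.range (K + 1), x k i)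
              - ((1 : ℝ) / n) * ∑ j : Fin n, f j xs)
        ≤ (ξhat ⬝ᵥ ((P ⊗ₖ (1 : Matrix (Fin d) (Fin d) ℝ)) *ᵥ ξhat))
            / (K + 1 : ℝ) := by
  intro K
  classical
  have hn' : (0:ℝ) < n := by exact_mod_cast hn
  have hnne : (n:ℝ) ≠ 0 := ne_of_gt hn'
  have hK : (0:ℝ) < (K:ℝ) + 1 := by positivity
  have hrow : ∀ i, ∑ j, W i j = 1 := by
    intro i
    have h := congrFun hWrow i
    simpa [Matrix.mulVec, dotProduct] using h
  have hcol : ∀ j, ∑ i, W i j = 1 := by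
    intro j
    have h := congrFun hWcol j
    simpa [Matrix.vecMul, dotProduct] using h
  -- gradients sum to zero at the optimum
  have hgs : ∑ i, gradient (f i) xs = 0 := by
    have hmin' : IsLocalMin (fun z => ∑ i : Fin n, f i z) xs := by
      apply Filter.Eventually.of_forall
      intro z
      have h := hmin z
      have hpos : (0:ℝ) < (1:ℝ)/n := by positivity
      exact le_of_mul_le_mul_left h hpos
    have hfd : fderiv ℝ (fun z => ∑ i : Fin n, f i z) xs = 0 := hmin'.fderiv_eq_zero
    have hsum : fderiv ℝ (fun z => ∑ i : Fin n, f i z) xs = ∑ i, fderiv ℝ (f i) xs :=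
      fderiv_fun_sum (fun i _ => (hdiff i).differentiableAt)
    have h0 : ∑ i, fderiv ℝ (f i) xs = 0 := by rw [← hsum, hfd]
    calc ∑ i, gradient (f i) xs
        = (InnerProductSpace.toDual ℝ (EuclideanSpace ℝ (Fin d))).symm
            (∑ i, fderiv ℝ (f i) xs) := by rw [map_sum]; rfl
      _ = 0 := by rw [h0]; simp
  -- tracking invariant
  have htrack : ∀ k, ∑ i, (s k i - gradient (f i) (x k i)) = (0 : EuclideanSpace ℝ (Fin d)) := by
    intro k
    induction k with
    | zero => simp [hs0]
    | succ k ih =>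
      have hstep' : ∀ i, s (k+1) i - gradient (f i) (x (k+1) i)
          = (∑ j, W i j • s k j) - gradient (f i) (x k i) := by
        intro i; rw [hs k i]; abel
      calc ∑ i, (s (k+1) i - gradient (f i) (x (k+1) i))
          = ∑ i, ((∑ j, W i j • s k j) - gradient (f i) (x k i)) :=
            Finset.sum_congr rfl (fun i _ => hstep' i)
        _ = (∑ i, ∑ j, W i j • s k j) - ∑ i, gradient (f i) (x k i) := by
            rw [Finset.sum_sub_distrib]
        _ = (∑ j, s k j) - ∑ i, gradient (f i) (x k i) := by
            rw [Finset.sum_comm]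
            congr 1
            apply Finset.sum_congr rfl
            intro j _
            rw [← Finset.sum_smul, hcol j, one_smul]
        _ = ∑ i, (s k i - gradient (f i) (x k i)) := by rw [Finset.sum_sub_distrib]
        _ = 0 := ih
  -- coordinatewise state and input
  set Ξ : ℕ → Fin d → (Fin n ⊕ Fin n) → ℝ := fun k l => Sum.elim
      (fun i => x k i l - xs l)
      (fun i => s k i l - gradient (f i) (x k i) l + gradient (f i) xs l) with hΞ
  set U : ℕ → Fin d → Fin n → ℝ :=
      fun k l i => gradient (f i) (x k i) l - gradient (f i) xs l with hU
  set Q : ℕ → ℝ := fun k => ∑ l, (Ξ k l) ⬝ᵥ (P *ᵥ Ξ k l) with hQdef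
  set Φ : ℕ → ℝ := fun k => ∑ i, ∑ j, (f i (x k j) - f i xs) with hΦ
  -- mean-zero constraint
  have hgsl : ∀ l : Fin d, ∑ i, gradient (f i) xs l = 0 := by
    intro l
    have h : (∑ i, gradient (f i) xs) l = 0 := by rw [hgs]; rfl
    rwa [aux_sum_apply] at h
  have hconstr : ∀ k (l : Fin d),
      ∑ i, (s k i l - gradient (f i) (x k i) l + gradient (f i) xs l) = 0 := by
    intro k l
    have e0 : (∑ i, (s k i - gradient (f i) (x k i))) l = 0 := by rw [htrack k]; rfl
    rw [aux_sum_apply] at e0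
    calc ∑ i, (s k i l - gradient (f i) (x k i) l + gradient (f i) xs l)
        = ∑ i, ((s k i - gradient (f i) (x k i)) l + gradient (f i) xs l) := by
          apply Finset.sum_congr rfl
          intro i _
          rw [PiLp.sub_apply]
      _ = 0 := by rw [Finset.sum_add_distrib, e0, hgsl l, add_zero]
  -- dynamics in coordinates
  have hdyn : ∀ k (l : Fin d),
      Sum.elim
        (fun i => (∑ j, W i j * (x k j l - xs l))
          - η * (s k i l - gradient (f i) (x k i) l + gradient (f i) xs l) - η * U k l i)
        (fun i => (∑ j, W i j * (s k j l - gradient (f j) (x k j) l + gradient (f j) xs l))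
          + ((∑ j, W i j * U k l j) - U k l i))
        = Ξ (k+1) l := by
    intro k l
    rw [hΞ, hU]
    funext p
    rcases p with i | i
    · simp only [Sum.elim_inl]
      rw [hx k i]
      have hco : ((∑ j, W i j • x k j) - η • s k i) l
          = (∑ j, W i j * x k j l) - η * s k i l := by
        rw [PiLp.sub_apply, PiLp.smul_apply, aux_sum_apply, smul_eq_mul]
        congr 1
      rw [hco]
      have hWx : ∑ j, W i j * (x k j l - xs l) = (∑ j, W i j * x k j l) - xs l := by
        rw [Finset.sum_congr rfl (fun j _ => mul_sub (W i j) (x k j l) (xs l)),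
          Finset.sum_sub_distrib, ← Finset.sum_mul, hrow i, one_mul]
      rw [hWx]
      ring
    · simp only [Sum.elim_inr]
      rw [hs k i]
      have hco : ((∑ j, W i j • s k j) + gradient (f i) (x (k+1) i)
            - gradient (f i) (x k i)) l
          = (∑ j, W i j * s k j l) + gradient (f i) (x (k+1) i) l
            - gradient (f i) (x k i) l := by
        rw [PiLp.sub_apply, PiLp.add_apply, aux_sum_apply]
        congr 2
      rw [hco]
      have hcomb : (∑ j, W i j * (s k j l - gradient (f j) (x k j) l + gradient (f j) xs l))
            + (∑ j, W i j * (gradient (f j) (x k j) l - gradient (f j) xs l))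
          = ∑ j, W i j * s k j l := by
        rw [← Finset.sum_add_distrib]
        apply Finset.sum_congr rfl
        intro j _
        ring
      linarith [hcomb]
  -- cocoercivity in coordinates
  have hcoco : ∀ k i, ∑ l, (U k l i)^2 ≤ β * ∑ l, (x k i l - xs l) * (U k l i) := by
    intro k i
    have h := aux_cocoercive (f i) (hconv i) (hdiff i) hβ (hsmooth i) (x k i) xs
    have e1 : ‖gradient (f i) (x k i) - gradient (f i) xs‖^2 = ∑ l, (U k l i)^2 := by
      rw [aux_norm_coords]
      apply Finset.sum_congr rfl
      intro l _
      rw [PiLp.sub_apply, hU]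
    have e2 : ⟪x k i - xs, gradient (f i) (x k i) - gradient (f i) xs⟫
        = ∑ l, (x k i l - xs l) * (U k l i) := by
      rw [aux_inner_coords]
      apply Finset.sum_congr rfl
      intro l _
      rw [PiLp.sub_apply, PiLp.sub_apply, hU]
    rw [e1, e2] at h
    exact h
  -- per-pair function gap bound
  have hpair : ∀ k i j, f i (x k j) - f i xs
      ≤ (∑ l, gradient (f i) (x k i) l * (x k j l - xs l))
        + β/2 * ∑ l, (x k j l - x k i l)^2 := by
    intro k i j
    have h1 := aux_convex_lower (f i) (hconv i) (hdiff i) (x k i) xs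
    have h2 := aux_descent (f i) (hdiff i) (hsmooth i) (x k i) (x k j)
    have e1 : ⟪gradient (f i) (x k i), xs - x k i⟫
        = ∑ l, gradient (f i) (x k i) l * (xs l - x k i l) := by
      rw [aux_inner_coords]
      exact Finset.sum_congr rfl (fun l _ => by rw [PiLp.sub_apply])
    have e2 : ⟪gradient (f i) (x k i), x k j - x k i⟫
        = ∑ l, gradient (f i) (x k i) l * (x k j l - x k i l) := by
      rw [aux_inner_coords]
      exact Finset.sum_congr rfl (fun l _ => by rw [PiLp.sub_apply])
    have e3 : ‖x k j - x k i‖^2 = ∑ l, (x k j l - x k i l)^2 := by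
      rw [aux_norm_coords]
      exact Finset.sum_congr rfl (fun l _ => by rw [PiLp.sub_apply])
    have e4 : (∑ l, gradient (f i) (x k i) l * (x k j l - x k i l))
          - (∑ l, gradient (f i) (x k i) l * (xs l - x k i l))
        = ∑ l, gradient (f i) (x k i) l * (x k j l - xs l) := by
      rw [← Finset.sum_sub_distrib]
      exact Finset.sum_congr rfl (fun l _ => by ring)
    rw [e1] at h1
    rw [e2, e3] at h2
    linarith [e4.ge, e4.le]
  -- the sum of gradients is the sum of U (coordinatewise)
  have hGsum : ∀ k (l : Fin d), ∑ i, gradient (f i) (x k i) l = ∑ i, U k l i := by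
    intro k l
    rw [hU]
    rw [Finset.sum_sub_distrib, hgsl l, sub_zero]
  -- one-step Lyapunov inequality
  have hstep : ∀ k, Q (k+1) ≤ Q k - (n:ℝ)⁻¹ * (n:ℝ)⁻¹ * Φ k := by
    intro k
    have hL1 : ∀ l : Fin d,
        Ξ (k+1) l ⬝ᵥ (P *ᵥ Ξ (k+1) l) - Ξ k l ⬝ᵥ (P *ᵥ Ξ k l)
          ≤ (-(n:ℝ)⁻¹ * (β * ((∑ i, (x k i l - xs l)^2)
                - (n:ℝ)⁻¹ * (∑ i, (x k i l - xs l))^2)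
              + (n:ℝ)⁻¹ * (∑ i, (x k i l - xs l)) * (∑ i, U k l i)))
            - lam * (2*β*(∑ i, (x k i l - xs l) * U k l i) - 2*∑ i, (U k l i)^2) := by
      intro l
      have hlmi := hLMI (fun i => x k i l - xs l)
        (fun i => s k i l - gradient (f i) (x k i) l + gradient (f i) xs l)
        (U k l) (hconstr k l)
      rw [add_mulVec, sub_mulVec, dotProduct_add, dotProduct_sub, aux_quad, aux_S0,
        smul_mulVec, dotProduct_smul, smul_eq_mul, aux_EME] at hlmi
      have heq : (fromBlocks W (-η • 1) 0 W) *ᵥ Sum.elim (fun i => x k i l - xs l)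
            (fun i => s k i l - gradient (f i) (x k i) l + gradient (f i) xs l)
          + (fromRows (-η • 1) (W - 1)) *ᵥ U k l = Ξ (k+1) l := by
        rw [aux_AB]
        exact hdyn k l
      rw [heq] at hlmi
      have hkl : Sum.elim (fun i => x k i l - xs l)
          (fun i => s k i l - gradient (f i) (x k i) l + gradient (f i) xs l) = Ξ k l := by
        rw [hΞ]
      rw [hkl] at hlmi
      linarith
    have h2 : Q (k+1) - Q k ≤
        (∑ l : Fin d, (-(n:ℝ)⁻¹ * (β * ((∑ i, (x k i l - xs l)^2)
              - (n:ℝ)⁻¹ * (∑ i, (x k i l - xs l))^2)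
            + (n:ℝ)⁻¹ * (∑ i, (x k i l - xs l)) * (∑ i, U k l i))))
          - lam * (∑ l : Fin d, (2*β*(∑ i, (x k i l - xs l) * U k l i)
              - 2*∑ i, (U k l i)^2)) := by
      rw [hQdef, Finset.mul_sum, ← Finset.sum_sub_distrib]
      rw [← Finset.sum_sub_distrib]
      exact Finset.sum_le_sum (fun l _ => by have := hL1 l; linarith)
    -- nonnegativity of the multiplier term
    have hM : 0 ≤ ∑ l : Fin d, (2*β*(∑ i, (x k i l - xs l) * U k l i)
        - 2*∑ i, (U k l i)^2) := by
      have e : ∑ l : Fin d, (2*β*(∑ i, (x k i l - xs l) * U k l i) - 2*∑ i, (U k l i)^2)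
          = ∑ i, (2*β*(∑ l, (x k i l - xs l) * U k l i) - 2*(∑ l, (U k l i)^2)) := by
        have e1 : ∀ l : Fin d, 2*β*(∑ i, (x k i l - xs l) * U k l i) - 2*∑ i, (U k l i)^2
            = ∑ i, (2*β*((x k i l - xs l) * U k l i) - 2*(U k l i)^2) := by
          intro l
          rw [Finset.mul_sum, Finset.mul_sum, ← Finset.sum_sub_distrib]
        have e2 : ∀ i, 2*β*(∑ l, (x k i l - xs l) * U k l i) - 2*(∑ l, (U k l i)^2)
            = ∑ l, (2*β*((x k i l - xs l) * U k l i) - 2*(U k l i)^2) := by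
          intro i
          rw [Finset.mul_sum, Finset.mul_sum, ← Finset.sum_sub_distrib]
        rw [Finset.sum_congr rfl (fun l _ => e1 l), Finset.sum_congr rfl (fun i _ => e2 i),
          Finset.sum_comm]
      rw [e]
      apply Finset.sum_nonneg
      intro i _
      have := hcoco k i
      linarith
    -- bound on the S₀ term
    have hΦb : Φ k ≤ ∑ l : Fin d, ((∑ i, (x k i l - xs l)) * (∑ i, U k l i)
        + β * n * (∑ i, (x k i l - xs l)^2) - β * (∑ i, (x k i l - xs l))^2) := by
      rw [hΦ]
      have step1 : ∑ i, ∑ j, (f i (x k j) - f i xs)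
          ≤ ∑ i, ∑ j, ((∑ l, gradient (f i) (x k i) l * (x k j l - xs l))
            + β/2 * ∑ l, (x k j l - x k i l)^2) :=
        Finset.sum_le_sum (fun i _ => Finset.sum_le_sum (fun j _ => hpair k i j))
      refine le_trans step1 (le_of_eq ?_)
      have swap1 : ∑ i, ∑ j, (∑ l, gradient (f i) (x k i) l * (x k j l - xs l))
          = ∑ l : Fin d, (∑ i, U k l i) * (∑ i, (x k i l - xs l)) := by
        have sA : ∀ i : Fin n, ∑ j, ∑ l : Fin d, gradient (f i) (x k i) l * (x k j l - xs l)
            = ∑ l : Fin d, ∑ j, gradient (f i) (x k i) l * (x k j l - xs l) :=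
          fun i => Finset.sum_comm
        rw [Finset.sum_congr rfl (fun i _ => sA i), Finset.sum_comm]
        apply Finset.sum_congr rfl
        intro l _
        rw [← hGsum k l, Finset.sum_mul]
        apply Finset.sum_congr rfl
        intro i _
        rw [Finset.mul_sum]
      have swap2 : ∑ i, ∑ j, (β/2 * ∑ l, (x k j l - x k i l)^2)
          = ∑ l : Fin d, (β * n * (∑ i, (x k i l - xs l)^2)
              - β * (∑ i, (x k i l - xs l))^2) := by
        have e1 : ∀ i, ∑ j, (β/2 * ∑ l, (x k j l - x k i l)^2)
            = β/2 * ∑ l, ∑ j, (x k j l - x k i l)^2 := by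
          intro i
          rw [← Finset.mul_sum, Finset.sum_comm]
        rw [Finset.sum_congr rfl (fun i _ => e1 i), ← Finset.mul_sum, Finset.sum_comm,
          Finset.mul_sum]
        apply Finset.sum_congr rfl
        intro l _
        have e2 : ∑ i, ∑ j, (x k j l - x k i l)^2
            = ∑ i, ∑ j, ((x k j l - xs l) - (x k i l - xs l))^2 :=
          Finset.sum_congr rfl (fun i _ => Finset.sum_congr rfl (fun j _ => by ring))
        have hps := aux_pairsq n (fun i => x k i l - xs l)
        simp only [] at hps
        rw [e2, hps]
        ring
      have hsplitin : ∀ i : Fin n, ∑ j,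
            ((∑ l : Fin d, gradient (f i) (x k i) l * (x k j l - xs l))
              + β/2 * ∑ l : Fin d, (x k j l - x k i l)^2)
          = (∑ j, ∑ l : Fin d, gradient (f i) (x k i) l * (x k j l - xs l))
            + ∑ j, (β/2 * ∑ l : Fin d, (x k j l - x k i l)^2) :=
        fun i => Finset.sum_add_distrib
      rw [Finset.sum_congr rfl (fun i _ => hsplitin i), Finset.sum_add_distrib, swap1, swap2,
        ← Finset.sum_add_distrib]
      apply Finset.sum_congr rfl
      intro l _
      ring
    have hSrel : (∑ l : Fin d, (-(n:ℝ)⁻¹ * (β * ((∑ i, (x k i l - xs l)^2)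
            - (n:ℝ)⁻¹ * (∑ i, (x k i l - xs l))^2)
          + (n:ℝ)⁻¹ * (∑ i, (x k i l - xs l)) * (∑ i, U k l i))))
        ≤ -((n:ℝ)⁻¹ * (n:ℝ)⁻¹) * Φ k := by
      have hid : ∀ l : Fin d, (-(n:ℝ)⁻¹ * (β * ((∑ i, (x k i l - xs l)^2)
              - (n:ℝ)⁻¹ * (∑ i, (x k i l - xs l))^2)
            + (n:ℝ)⁻¹ * (∑ i, (x k i l - xs l)) * (∑ i, U k l i)))
          = -((n:ℝ)⁻¹ * (n:ℝ)⁻¹) * ((∑ i, (x k i l - xs l)) * (∑ i, U k l i)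
            + β * n * (∑ i, (x k i l - xs l)^2) - β * (∑ i, (x k i l - xs l))^2) := by
        intro l
        field_simp
        ring
      rw [Finset.sum_congr rfl (fun l _ => hid l), ← Finset.mul_sum]
      have hc : (0:ℝ) ≤ (n:ℝ)⁻¹ * (n:ℝ)⁻¹ := by positivity
      have h6 := mul_le_mul_of_nonneg_left hΦb hc
      linarith
    have hlamM : 0 ≤ lam * (∑ l : Fin d, (2*β*(∑ i, (x k i l - xs l) * U k l i)
        - 2*∑ i, (U k l i)^2)) := mul_nonneg hlam hM
    linarith
  -- telescoping
  have htel : (n:ℝ)⁻¹ * (n:ℝ)⁻¹ * ∑ k ∈ Finset.range (K+1), Φ k ≤ Q 0 - Q (K+1) := by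
    have hind : ∀ m : ℕ, (n:ℝ)⁻¹ * (n:ℝ)⁻¹ * ∑ k ∈ Finset.range m, Φ k ≤ Q 0 - Q m := by
      intro m
      induction m with
      | zero => simp
      | succ m ih =>
        rw [Finset.sum_range_succ, mul_add]
        have := hstep m
        linarith
    exact hind (K+1)
  have hQfin : 0 ≤ Q (K+1) := by
    rw [hQdef]
    apply Finset.sum_nonneg
    intro l _
    have := hP.dotProduct_mulVec_nonneg (Ξ (K+1) l)
    simpa using this
  -- Jensen step
  have hjen : ∀ (j i : Fin n),
      f j ((1 / (K + 1 : ℝ)) • ∑ k ∈ Finset.range (K + 1), x k i) - f j xs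
        ≤ (1/((K:ℝ)+1)) * ∑ k ∈ Finset.range (K+1), (f j (x k i) - f j xs) := by
    intro j i
    have h₀ : ∀ k ∈ Finset.range (K+1), (0:ℝ) ≤ 1/((K:ℝ)+1) := fun _ _ => by positivity
    have h₁ : ∑ _k ∈ Finset.range (K+1), (1/((K:ℝ)+1)) = 1 := by
      rw [Finset.sum_const, Finset.card_range, nsmul_eq_mul]
      push_cast
      field_simp
    have hmem : ∀ k ∈ Finset.range (K+1), x k i ∈ (Set.univ : Set (EuclideanSpace ℝ (Fin d))) :=
      fun _ _ => Set.mem_univ _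
    have hmap := (hconv j).map_sum_le h₀ h₁ hmem
    have hrw : ((1 : ℝ) / (K + 1 : ℝ)) • ∑ k ∈ Finset.range (K + 1), x k i
        = ∑ k ∈ Finset.range (K+1), (1/((K:ℝ)+1)) • x k i := by
      rw [Finset.smul_sum]
    rw [hrw]
    have hmap' : f j (∑ k ∈ Finset.range (K+1), (1/((K:ℝ)+1)) • x k i)
        ≤ ∑ k ∈ Finset.range (K+1), (1/((K:ℝ)+1)) * f j (x k i) := hmap
    calc f j (∑ k ∈ Finset.range (K+1), (1/((K:ℝ)+1)) • x k i) - f j xs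
        ≤ (∑ k ∈ Finset.range (K+1), (1/((K:ℝ)+1)) * f j (x k i)) - f j xs := by
          linarith [hmap']
      _ = (1/((K:ℝ)+1)) * ∑ k ∈ Finset.range (K+1), (f j (x k i) - f j xs) := by
          rw [Finset.mul_sum,
            Finset.sum_congr rfl (fun k _ => mul_sub (1/((K:ℝ)+1)) (f j (x k i)) (f j xs)),
            Finset.sum_sub_distrib]
          congr 1
          rw [Finset.sum_const, Finset.card_range, nsmul_eq_mul]
          push_cast
          field_simp
  -- identify Q 0 with the Kronecker quadratic form
  have hvfull : (fun pd : (Fin n ⊕ Fin n) × Fin d => Sum.elim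
      (fun i => x 0 i pd.2 - xs pd.2)
      (fun i => (s 0 i - gradient (f i) (x 0 i)) pd.2 - (-(gradient (f i) xs pd.2))) pd.1)
      = fun pd => Ξ 0 pd.2 pd.1 := by
    funext pd
    rcases pd with ⟨p, l⟩
    rcases p with i | i
    · simp only [hΞ, Sum.elim_inl]
    · simp only [hΞ, Sum.elim_inr, PiLp.sub_apply]
      ring
  have hQ0eq : (fun pd : (Fin n ⊕ Fin n) × Fin d => Sum.elim
      (fun i => x 0 i pd.2 - xs pd.2)
      (fun i => (s 0 i - gradient (f i) (x 0 i)) pd.2 - (-(gradient (f i) xs pd.2))) pd.1)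
        ⬝ᵥ ((P ⊗ₖ (1 : Matrix (Fin d) (Fin d) ℝ)) *ᵥ
          (fun pd : (Fin n ⊕ Fin n) × Fin d => Sum.elim
            (fun i => x 0 i pd.2 - xs pd.2)
            (fun i => (s 0 i - gradient (f i) (x 0 i)) pd.2
              - (-(gradient (f i) xs pd.2))) pd.1)) = Q 0 := by
    rw [hvfull, aux_kron, hQdef]
  -- final assembly
  have h3 : ((1:ℝ)/n) * ((1:ℝ)/n) * ∑ k ∈ Finset.range (K+1), Φ k ≤ Q 0 := by
    rw [one_div]
    linarith [htel, hQfin]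
  have hL : ((1:ℝ)/n) * ∑ i : Fin n, (((1:ℝ)/n) * ∑ j : Fin n,
        f j ((1 / (K + 1 : ℝ)) • ∑ k ∈ Finset.range (K + 1), x k i)
      - ((1:ℝ)/n) * ∑ j : Fin n, f j xs)
      = ((1:ℝ)/n) * ((1:ℝ)/n) * ∑ i : Fin n, ∑ j : Fin n,
        (f j ((1 / (K + 1 : ℝ)) • ∑ k ∈ Finset.range (K + 1), x k i) - f j xs) := by
    have t0 : ∀ i : Fin n, ((1:ℝ)/n) * (∑ j : Fin n,
          f j ((1 / (K + 1 : ℝ)) • ∑ k ∈ Finset.range (K + 1), x k i))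
        - ((1:ℝ)/n) * ∑ j : Fin n, f j xs
        = ((1:ℝ)/n) * ∑ j : Fin n,
          (f j ((1 / (K + 1 : ℝ)) • ∑ k ∈ Finset.range (K + 1), x k i) - f j xs) := by
      intro i
      rw [← mul_sub, ← Finset.sum_sub_distrib]
    rw [Finset.sum_congr rfl (fun i _ => t0 i), ← Finset.mul_sum, ← mul_assoc]
  have hmid : ∑ i : Fin n, ∑ j : Fin n,
        (f j ((1 / (K + 1 : ℝ)) • ∑ k ∈ Finset.range (K + 1), x k i) - f j xs)
      ≤ (1/((K:ℝ)+1)) * ∑ k ∈ Finset.range (K+1), Φ k := by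
    calc ∑ i : Fin n, ∑ j : Fin n,
          (f j ((1 / (K + 1 : ℝ)) • ∑ k ∈ Finset.range (K + 1), x k i) - f j xs)
        ≤ ∑ i : Fin n, ∑ j : Fin n,
            ((1/((K:ℝ)+1)) * ∑ k ∈ Finset.range (K+1), (f j (x k i) - f j xs)) :=
          Finset.sum_le_sum (fun i _ => Finset.sum_le_sum (fun j _ => hjen j i))
      _ = (1/((K:ℝ)+1)) * ∑ k ∈ Finset.range (K+1), Φ k := by
          have t1 : ∀ i : Fin n, ∑ j : Fin n, ((1/((K:ℝ)+1))
                * ∑ k ∈ Finset.range (K+1), (f j (x k i) - f j xs))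
              = (1/((K:ℝ)+1)) * ∑ j : Fin n, ∑ k ∈ Finset.range (K+1), (f j (x k i) - f j xs) :=
            fun i => (Finset.mul_sum _ _ _).symm
          have t3 : ∀ i : Fin n, ∑ j : Fin n, ∑ k ∈ Finset.range (K+1), (f j (x k i) - f j xs)
              = ∑ k ∈ Finset.range (K+1), ∑ j : Fin n, (f j (x k i) - f j xs) :=
            fun i => Finset.sum_comm
          rw [Finset.sum_congr rfl (fun i _ => t1 i), ← Finset.mul_sum]
          congr 1
          have t4 : ∑ i : Fin n, ∑ k ∈ Finset.range (K+1), ∑ j : Fin n, (f j (x k i) - f j xs)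
              = ∑ k ∈ Finset.range (K+1), ∑ i : Fin n, ∑ j : Fin n, (f j (x k i) - f j xs) :=
            Finset.sum_comm
          rw [Finset.sum_congr rfl (fun i _ => t3 i), t4]
          apply Finset.sum_congr rfl
          intro k _
          exact Finset.sum_comm
  calc ((1:ℝ)/n) * ∑ i : Fin n, (((1:ℝ)/n) * ∑ j : Fin n,
        f j ((1 / (K + 1 : ℝ)) • ∑ k ∈ Finset.range (K + 1), x k i)
      - ((1:ℝ)/n) * ∑ j : Fin n, f j xs)
      = ((1:ℝ)/n) * ((1:ℝ)/n) * ∑ i : Fin n, ∑ j : Fin n,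
        (f j ((1 / (K + 1 : ℝ)) • ∑ k ∈ Finset.range (K + 1), x k i) - f j xs) := hL
    _ ≤ ((1:ℝ)/n) * ((1:ℝ)/n) * ((1/((K:ℝ)+1)) * ∑ k ∈ Finset.range (K+1), Φ k) := by
        apply mul_le_mul_of_nonneg_left hmid (by positivity)
    _ ≤ _ := by
        rw [hQ0eq]
        have h4 : ((1:ℝ)/n) * ((1:ℝ)/n) * ((1/((K:ℝ)+1)) * ∑ k ∈ Finset.range (K+1), Φ k)
            = (1/((K:ℝ)+1)) * (((1:ℝ)/n) * ((1:ℝ)/n) * ∑ k ∈ Finset.range (K+1), Φ k) := by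
          ring
        have h5 : Q 0 / ((K:ℝ)+1) = (1/((K:ℝ)+1)) * Q 0 := by ring
        rw [h4, h5]
        exact mul_le_mul_of_nonneg_left h3 (by positivity)
end

section
/- Let β > 0 and η > 0. There exist real numbers P ≥ 0 and λ₁ ≥ 0 such that the symmetric 2×2 matrix [[0, −ηP + λ₁β + 1/2], [−ηP + λ₁β + 1/2, η²P − 2λ₁]] is negative semidefinite if and only if η < 2/β. -/
open Matrix

/-- **Section IV-A**: for the centralized gradient method, the 2×2 LMI
`[[0, −ηP + λ₁β + 1/2], [−ηP + λ₁β + 1/2, η²P − 2λ₁]] ⪯ 0` is feasible with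
`P ≥ 0`, `λ₁ ≥ 0` if and only if `η < 2/β`.  (Negative semidefiniteness of `M`
is expressed as positive semidefiniteness of `−M`.) -/
theorem centralized_gradient_LMI_feasible_iff
    (β η : ℝ) (hβ : 0 < β) (hη : 0 < η) :
    (∃ P lam : ℝ, 0 ≤ P ∧ 0 ≤ lam ∧
        (-(!![0, -η * P + lam * β + 1 / 2;
              -η * P + lam * β + 1 / 2, η ^ 2 * P - 2 * lam])).PosSemidef)
      ↔ η < 2 / β := by
  constructor
  · rintro ⟨P, lam, hP, hlam, hpsd⟩
    set b : ℝ := -η * P + lam * β + 1 / 2 with hb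
    set c : ℝ := η ^ 2 * P - 2 * lam with hc
    have key : ∀ t : ℝ, 0 ≤ -2 * b * t - c := by
      intro t
      have h := hpsd.dotProduct_mulVec_nonneg ![t, 1]
      simp [Matrix.mulVec, dotProduct, Fin.sum_univ_two] at h
      linarith
    -- off-diagonal must vanish
    have hb0 : b = 0 := by
      by_contra hbne
      have h := key ((1 - c) / (2 * b))
      have : -2 * b * ((1 - c) / (2 * b)) - c = -1 := by
        field_simp
        ring
      rw [this] at h
      linarith
    have hc0 : c ≤ 0 := by
      have h := key 0
      linarith
    -- from b = 0 : η P = lam β + 1/2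
    have hEq : η * P = lam * β + 1 / 2 := by
      have : -η * P + lam * β + 1 / 2 = 0 := hb0
      linarith
    -- c ≤ 0 : η² P ≤ 2 lam, so η (lam β + 1/2) ≤ 2 lam
    have hIneq : η * (lam * β + 1 / 2) ≤ 2 * lam := by
      have h1 : η ^ 2 * P ≤ 2 * lam := by
        have : η ^ 2 * P - 2 * lam ≤ 0 := hc0
        linarith
      have h2 : η * (η * P) = η ^ 2 * P := by ring
      calc η * (lam * β + 1 / 2) = η ^ 2 * P := by rw [← hEq]; ring
        _ ≤ 2 * lam := h1
    -- so lam (2 - η β) ≥ η/2 > 0, hence 2 - η β > 0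
    have hpos : lam * (2 - η * β) ≥ η / 2 := by nlinarith
    have h2 : 0 < 2 - η * β := by
      by_contra h
      push_neg at h
      nlinarith
    rw [lt_div_iff₀ hβ]
    nlinarith
  · intro hlt
    have h2 : 0 < 2 - η * β := by
      have := (lt_div_iff₀ hβ).mp hlt
      linarith
    refine ⟨(η / (2 * (2 - η * β)) * β + 1 / 2) / η, η / (2 * (2 - η * β)), ?_, ?_, ?_⟩
    · positivity
    · positivity
    · have hmat : (-(!![0, -η * ((η / (2 * (2 - η * β)) * β + 1 / 2) / η) + η / (2 * (2 - η * β)) * β + 1 / 2;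
              -η * ((η / (2 * (2 - η * β)) * β + 1 / 2) / η) + η / (2 * (2 - η * β)) * β + 1 / 2,
              η ^ 2 * ((η / (2 * (2 - η * β)) * β + 1 / 2) / η) - 2 * (η / (2 * (2 - η * β)))]) :
          Matrix (Fin 2) (Fin 2) ℝ) = 0 := by
        ext i j
        fin_cases i <;> fin_cases j <;>
          simp <;> field_simp <;> ring
      rw [hmat]
      exact Matrix.PosSemidef.zero
end
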